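/- arXiv:2207.06129 — 2 statements merged into one kernel-verified Lean document; each statement's English description precedes it below -/
import Mathlib

section
/- Let w ∈ A_1. Let T be an operator mapping measurable functions on ℝⁿ to measurable functions on ℝⁿ such that: (i) T is additive, T(f+g) = Tf + Tg; (ii) T is bounded from L^{1,w} to WL^{1,w}, i.e. there is C₀ > 0 with ‖Tf‖_{WL^{1,w}(ℝⁿ)} ≤ C₀‖f‖_{L^{1,w}(ℝⁿ)} for every f ∈ L^{1,w}; and (iii) there is A > 0 such that |Tf(x)| ≤ A·∫_{ℝⁿ} |f(y)|/|x−y|^n dy for every f and every x outside the support of f. Then there exists a constant C > 0, independent of f, a, and r, such that for every a ∈ ℝⁿ, r > 0, and f ∈ L^{1,w}_loc: ‖Tf‖_{WL^{1,w}(B(a,r))} ≤ C·w(B(a,r))·∫_r^∞ w(B(a,s))^{-1} ‖f‖_{L^{1,w}(B(a,s))} ds/s. -/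
open MeasureTheory Metric Set
open scoped ENNReal

noncomputable section

/-- The weighted measure of a set: `w(E) = ∫_E w(x) dx`, valued in `ℝ≥0∞`. -/
def wSet {n : ℕ} (w : EuclideanSpace ℝ (Fin n) → ℝ)
    (E : Set (EuclideanSpace ℝ (Fin n))) : ℝ≥0∞ :=
  ∫⁻ x in E, ENNReal.ofReal (w x)

/-- The weighted Lebesgue norm `‖f‖_{L^{p,w}(Ω)} = (∫_Ω |f(x)|^p w(x) dx)^{1/p}`. -/
def wLp {n : ℕ} (p : ℝ) (w f : EuclideanSpace ℝ (Fin n) → ℝ)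
    (Ω : Set (EuclideanSpace ℝ (Fin n))) : ℝ≥0∞ :=
  (∫⁻ x in Ω, ENNReal.ofReal |f x| ^ p * ENNReal.ofReal (w x)) ^ (1 / p)

/-- The weighted Lebesgue norm for an `ℝ≥0∞`-valued function. -/
def wLpE {n : ℕ} (p : ℝ) (w : EuclideanSpace ℝ (Fin n) → ℝ)
    (g : EuclideanSpace ℝ (Fin n) → ℝ≥0∞) (Ω : Set (EuclideanSpace ℝ (Fin n))) : ℝ≥0∞ :=
  (∫⁻ x in Ω, g x ^ p * ENNReal.ofReal (w x)) ^ (1 / p)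

/-- The weak weighted Lebesgue norm `‖f‖_{WL^{p,w}(Ω)} = sup_{γ>0} γ·w({x ∈ Ω : |f(x)| > γ})^{1/p}`. -/
def wWeakLp {n : ℕ} (p : ℝ) (w f : EuclideanSpace ℝ (Fin n) → ℝ)
    (Ω : Set (EuclideanSpace ℝ (Fin n))) : ℝ≥0∞ :=
  ⨆ γ : Set.Ioi (0 : ℝ),
    ENNReal.ofReal γ.1 * (wSet w {x | x ∈ Ω ∧ γ.1 < |f x|}) ^ (1 / p)

/-- The weak weighted Lebesgue norm for an `ℝ≥0∞`-valued function. -/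
def wWeakLpE {n : ℕ} (p : ℝ) (w : EuclideanSpace ℝ (Fin n) → ℝ)
    (g : EuclideanSpace ℝ (Fin n) → ℝ≥0∞) (Ω : Set (EuclideanSpace ℝ (Fin n))) : ℝ≥0∞ :=
  ⨆ γ : Set.Ioi (0 : ℝ),
    ENNReal.ofReal γ.1 * (wSet w {x | x ∈ Ω ∧ ENNReal.ofReal γ.1 < g x}) ^ (1 / p)

/-- `f ∈ L^{p,w}_loc`: `f` is measurable and `‖f‖_{L^{p,w}(B)} < ∞` on every ball. -/
def MemLocWLp {n : ℕ} (p : ℝ) (w f : EuclideanSpace ℝ (Fin n) → ℝ) : Prop :=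
  Measurable f ∧ ∀ (a : EuclideanSpace ℝ (Fin n)) (r : ℝ), 0 < r → wLp p w f (ball a r) < ⊤

/-- A weight: nonnegative, measurable, locally integrable, positive a.e. -/
def IsWeight {n : ℕ} (w : EuclideanSpace ℝ (Fin n) → ℝ) : Prop :=
  Measurable w ∧ (∀ x, 0 ≤ w x) ∧ LocallyIntegrable w volume ∧ ∀ᵐ x ∂volume, 0 < w x

/-- The Muckenhoupt class `A_p` for `1 < p`. -/
def MuckAp {n : ℕ} (p : ℝ) (w : EuclideanSpace ℝ (Fin n) → ℝ) : Prop :=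
  ∃ C : ℝ, 0 < C ∧ ∀ (a : EuclideanSpace ℝ (Fin n)) (r : ℝ), 0 < r →
    ((volume (ball a r))⁻¹ * ∫⁻ x in ball a r, ENNReal.ofReal (w x)) *
      ((volume (ball a r))⁻¹ *
        ∫⁻ x in ball a r, ENNReal.ofReal (w x ^ (-(1 / (p - 1))))) ^ (p - 1) ≤
      ENNReal.ofReal C

/-- The Muckenhoupt class `A_1`. -/
def MuckA1 {n : ℕ} (w : EuclideanSpace ℝ (Fin n) → ℝ) : Prop :=
  ∃ C : ℝ, 0 < C ∧ ∀ (a : EuclideanSpace ℝ (Fin n)) (r : ℝ), 0 < r →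
    ((volume (ball a r))⁻¹ * ∫⁻ x in ball a r, ENNReal.ofReal (w x)) *
      essSup (fun x => ENNReal.ofReal (w x)⁻¹) (volume.restrict (ball a r)) ≤
      ENNReal.ofReal C

/-- The class `A_{p,q}` for `1 < p`, where `p'` is the conjugate exponent of `p`. -/
def MuckApq {n : ℕ} (p q p' : ℝ) (w : EuclideanSpace ℝ (Fin n) → ℝ) : Prop :=
  ∃ C : ℝ, 0 < C ∧ ∀ (a : EuclideanSpace ℝ (Fin n)) (r : ℝ), 0 < r →
    ((volume (ball a r))⁻¹ * ∫⁻ x in ball a r, ENNReal.ofReal (w x ^ q)) ^ (1 / q) *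
      ((volume (ball a r))⁻¹ * ∫⁻ x in ball a r, ENNReal.ofReal (w x ^ (-p'))) ^ (1 / p') ≤
      ENNReal.ofReal C

/-- The class `A_{1,q}`. -/
def MuckA1q {n : ℕ} (q : ℝ) (w : EuclideanSpace ℝ (Fin n) → ℝ) : Prop :=
  ∃ C : ℝ, 0 < C ∧ ∀ (a : EuclideanSpace ℝ (Fin n)) (r : ℝ), 0 < r →
    ((volume (ball a r))⁻¹ * ∫⁻ x in ball a r, ENNReal.ofReal (w x ^ q)) ^ (1 / q) *
      essSup (fun x => ENNReal.ofReal (w x)⁻¹) (volume.restrict (ball a r)) ≤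
      ENNReal.ofReal C

/-- The Hardy–Littlewood maximal operator. -/
def HLMax {n : ℕ} (f : EuclideanSpace ℝ (Fin n) → ℝ)
    (x : EuclideanSpace ℝ (Fin n)) : ℝ≥0∞ :=
  ⨆ r : Set.Ioi (0 : ℝ), (volume (ball x r.1))⁻¹ * ∫⁻ y in ball x r.1, ENNReal.ofReal |f y|

/-- The fractional integral operator `I_α` (applied to `|f|`, valued in `ℝ≥0∞`). -/
def fracIntE {n : ℕ} (α : ℝ) (f : EuclideanSpace ℝ (Fin n) → ℝ)
    (x : EuclideanSpace ℝ (Fin n)) : ℝ≥0∞ :=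
  ∫⁻ y, ENNReal.ofReal |f y| / ENNReal.ofReal (dist x y ^ ((n : ℝ) - α))

/-- The fractional maximal operator `M_α`. -/
def fracMax {n : ℕ} (α : ℝ) (f : EuclideanSpace ℝ (Fin n) → ℝ)
    (x : EuclideanSpace ℝ (Fin n)) : ℝ≥0∞ :=
  ⨆ r : Set.Ioi (0 : ℝ),
    (volume (ball x r.1)) ^ (α / (n : ℝ) - 1) * ∫⁻ y in ball x r.1, ENNReal.ofReal |f y|

/-- The generalized weighted Morrey norm `‖f‖_{M^{p,w}_ψ}`. -/
def morreyNorm {n : ℕ} (p : ℝ) (w : EuclideanSpace ℝ (Fin n) → ℝ)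
    (ψ : EuclideanSpace ℝ (Fin n) → ℝ → ℝ) (f : EuclideanSpace ℝ (Fin n) → ℝ) : ℝ≥0∞ :=
  ⨆ (a : EuclideanSpace ℝ (Fin n)) (r : Set.Ioi (0 : ℝ)),
    (ENNReal.ofReal (ψ a r.1))⁻¹ * wSet w (ball a r.1) ^ (-(1 / p)) * wLp p w f (ball a r.1)

/-- The generalized weighted Morrey norm for an `ℝ≥0∞`-valued function. -/
def morreyNormE {n : ℕ} (p : ℝ) (w : EuclideanSpace ℝ (Fin n) → ℝ)
    (ψ : EuclideanSpace ℝ (Fin n) → ℝ → ℝ) (g : EuclideanSpace ℝ (Fin n) → ℝ≥0∞) : ℝ≥0∞ :=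
  ⨆ (a : EuclideanSpace ℝ (Fin n)) (r : Set.Ioi (0 : ℝ)),
    (ENNReal.ofReal (ψ a r.1))⁻¹ * wSet w (ball a r.1) ^ (-(1 / p)) * wLpE p w g (ball a r.1)

/-- The generalized weighted weak Morrey norm `‖f‖_{WM^{p,w}_ψ}`. -/
def morreyWeakNorm {n : ℕ} (p : ℝ) (w : EuclideanSpace ℝ (Fin n) → ℝ)
    (ψ : EuclideanSpace ℝ (Fin n) → ℝ → ℝ) (f : EuclideanSpace ℝ (Fin n) → ℝ) : ℝ≥0∞ :=
  ⨆ (a : EuclideanSpace ℝ (Fin n)) (r : Set.Ioi (0 : ℝ)),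
    (ENNReal.ofReal (ψ a r.1))⁻¹ * wSet w (ball a r.1) ^ (-(1 / p)) * wWeakLp p w f (ball a r.1)

/-- The generalized weighted weak Morrey norm for an `ℝ≥0∞`-valued function. -/
def morreyWeakNormE {n : ℕ} (p : ℝ) (w : EuclideanSpace ℝ (Fin n) → ℝ)
    (ψ : EuclideanSpace ℝ (Fin n) → ℝ → ℝ) (g : EuclideanSpace ℝ (Fin n) → ℝ≥0∞) : ℝ≥0∞ :=
  ⨆ (a : EuclideanSpace ℝ (Fin n)) (r : Set.Ioi (0 : ℝ)),
    (ENNReal.ofReal (ψ a r.1))⁻¹ * wSet w (ball a r.1) ^ (-(1 / p)) * wWeakLpE p w g (ball a r.1)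

end

/-!
Split `f = f₁ + f₂` with `f₁ = f · 1_{B(a,2r)}`. For the near part, the weak-type bound gives
`‖Tf₁‖ ≤ C₀ ‖f‖_{L^{1,w}(B(a,2r))}`, and this norm is at most `2 w(B(a,4r))` times the
tail integral (look only at `s ∈ (2r,4r]`); the doubling property of `A_1` weights replaces
`w(B(a,4r))` by `w(B(a,r))`. For the far part, `|x - y| ≥ |y - a|/2` when `x ∈ B(a,r)` and
`y ∉ B(a,2r)`; writing `|y - a|^{-n} = n ∫_{|y-a|}^∞ s^{-n-1} ds` and using Tonelli bounds
`|Tf₂(x)|` by `∫_{2r}^∞ (∫_{B(a,s)} |f|) s^{-n-1} ds`, and the `A_1` condition turns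
`|B(a,s)|⁻¹ ∫_{B(a,s)} |f|` into `C w(B(a,s))⁻¹ ‖f‖_{L^{1,w}(B(a,s))}`. So `Tf₂` is bounded
on `B(a,r)` by a multiple of the tail integral, and its weak norm there is at most that bound
times `w(B(a,r))`.
-/

section WeightedNorms

variable {n : ℕ} (w : EuclideanSpace ℝ (Fin n) → ℝ)

@[simp]
lemma wLp_one (f : EuclideanSpace ℝ (Fin n) → ℝ) (Ω : Set (EuclideanSpace ℝ (Fin n))) :
    wLp 1 w f Ω = ∫⁻ x in Ω, ENNReal.ofReal |f x| * ENNReal.ofReal (w x) := by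
  simp [wLp]

@[simp]
lemma wWeakLp_one (F : EuclideanSpace ℝ (Fin n) → ℝ) (Ω : Set (EuclideanSpace ℝ (Fin n))) :
    wWeakLp 1 w F Ω =
      ⨆ γ : Ioi (0 : ℝ), ENNReal.ofReal γ.1 * wSet w {x | x ∈ Ω ∧ γ.1 < |F x|} := by
  simp [wWeakLp]

lemma wSet_mono {E F : Set (EuclideanSpace ℝ (Fin n))} (h : E ⊆ F) : wSet w E ≤ wSet w F :=
  lintegral_mono_set h

lemma wSet_ball_pos (hwm : Measurable w) (hpos : ∀ᵐ x ∂volume, 0 < w x)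
    (a : EuclideanSpace ℝ (Fin n)) {r : ℝ} (hr : 0 < r) : 0 < wSet w (ball a r) := by
  refine pos_iff_ne_zero.2 fun h0 => ?_
  rw [wSet, lintegral_eq_zero_iff hwm.ennreal_ofReal] at h0
  have : (ae (volume.restrict (ball a r))).NeBot := ae_neBot.2 <| by
    simpa [Measure.restrict_eq_zero] using (measure_ball_pos volume a hr).ne'
  obtain ⟨x, hx0, hxpos⟩ := (h0.and (ae_restrict_of_ae hpos)).exists
  simp only [Pi.zero_apply, ENNReal.ofReal_eq_zero] at hx0
  exact hx0.not_gt hxpos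

lemma wSet_ball_lt_top (hli : LocallyIntegrable w volume) (a : EuclideanSpace ℝ (Fin n))
    (r : ℝ) : wSet w (ball a r) < ⊤ :=
  ((hli.integrableOn_isCompact (isCompact_closedBall a r)).mono_set
    ball_subset_closedBall).lintegral_lt_top

lemma wLp_one_mono_set (f : EuclideanSpace ℝ (Fin n) → ℝ)
    {E F : Set (EuclideanSpace ℝ (Fin n))} (h : E ⊆ F) : wLp 1 w f E ≤ wLp 1 w f F := by
  simpa only [wLp_one] using lintegral_mono_set h

lemma wLp_one_indicator (f : EuclideanSpace ℝ (Fin n) → ℝ)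
    {E : Set (EuclideanSpace ℝ (Fin n))} (hE : MeasurableSet E) :
    wLp 1 w (E.indicator f) univ = wLp 1 w f E := by
  rw [wLp_one, wLp_one, Measure.restrict_univ, ← lintegral_indicator hE]
  congr 1 with x
  by_cases hx : x ∈ E <;> simp [hx]

lemma wWeakLp_one_mono_set (F : EuclideanSpace ℝ (Fin n) → ℝ)
    {Ω Ω' : Set (EuclideanSpace ℝ (Fin n))} (h : Ω ⊆ Ω') :
    wWeakLp 1 w F Ω ≤ wWeakLp 1 w F Ω' := by
  simp only [wWeakLp_one]
  exact iSup_mono fun γ =>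
    mul_le_mul_right (wSet_mono w (ofPred_subset_ofPred.2 fun x hx => ⟨h hx.1, hx.2⟩)) _

lemma wWeakLp_one_le_mul_wSet {F : EuclideanSpace ℝ (Fin n) → ℝ}
    {Ω : Set (EuclideanSpace ℝ (Fin n))} {M : ℝ≥0∞}
    (hF : ∀ x ∈ Ω, ENNReal.ofReal |F x| ≤ M) :
    wWeakLp 1 w F Ω ≤ M * wSet w Ω := by
  rw [wWeakLp_one]
  refine iSup_le fun γ => ?_
  rcases eq_empty_or_nonempty {x | x ∈ Ω ∧ γ.1 < |F x|} with hempty | ⟨x, hxΩ, hx⟩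
  · simp [hempty, wSet]
  · exact mul_le_mul' ((ENNReal.ofReal_le_ofReal hx.le).trans (hF x hxΩ))
      (wSet_mono w fun y hy => hy.1)

lemma wWeakLp_one_add_le (F G : EuclideanSpace ℝ (Fin n) → ℝ)
    (Ω : Set (EuclideanSpace ℝ (Fin n))) :
    wWeakLp 1 w (F + G) Ω ≤ 2 * wWeakLp 1 w F Ω + 2 * wWeakLp 1 w G Ω := by
  rw [wWeakLp_one]
  refine iSup_le fun ⟨γ, hγ⟩ => ?_
  have hγ2 : γ / 2 ∈ Ioi (0 : ℝ) := half_pos (mem_Ioi.1 hγ)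
  have hsub : {x | x ∈ Ω ∧ γ < |(F + G) x|} ⊆
      {x | x ∈ Ω ∧ γ / 2 < |F x|} ∪ {x | x ∈ Ω ∧ γ / 2 < |G x|} := by
    rintro x ⟨hxΩ, hx⟩
    have := abs_add_le (F x) (G x)
    by_contra! h
    simp only [mem_union, mem_ofPred_eq, not_or, not_and, not_lt] at h
    simp only [Pi.add_apply] at hx
    linarith [h.1 hxΩ, h.2 hxΩ]
  have hγ' : ENNReal.ofReal γ = 2 * ENNReal.ofReal (γ / 2) := by
    rw [← ENNReal.ofReal_ofNat 2, ← ENNReal.ofReal_mul zero_le_two,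
      mul_div_cancel₀ _ two_ne_zero]
  calc ENNReal.ofReal γ * wSet w {x | x ∈ Ω ∧ γ < |(F + G) x|}
      ≤ 2 * ENNReal.ofReal (γ / 2) * (wSet w {x | x ∈ Ω ∧ γ / 2 < |F x|} +
          wSet w {x | x ∈ Ω ∧ γ / 2 < |G x|}) := by
        rw [hγ']
        exact mul_le_mul_right ((wSet_mono w hsub).trans (lintegral_union_le _ _ _)) _
    _ = 2 * (ENNReal.ofReal (γ / 2) * wSet w {x | x ∈ Ω ∧ γ / 2 < |F x|}) +
          2 * (ENNReal.ofReal (γ / 2) * wSet w {x | x ∈ Ω ∧ γ / 2 < |G x|}) := by ring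
    _ ≤ 2 * wWeakLp 1 w F Ω + 2 * wWeakLp 1 w G Ω := by
        simp only [wWeakLp_one]
        gcongr <;> exact le_iSup_of_le ⟨γ / 2, hγ2⟩ le_rfl

end WeightedNorms

section MuckenhouptA1

variable {n : ℕ} (w : EuclideanSpace ℝ (Fin n) → ℝ)

/-- `‖w⁻¹‖_{L^∞(E)}`. -/
noncomputable def essSupInv (E : Set (EuclideanSpace ℝ (Fin n))) : ℝ≥0∞ :=
  essSup (fun x => ENNReal.ofReal (w x)⁻¹) (volume.restrict E)

/-- The `A_1` condition with constant `C`, multiplied out by `|B|`. -/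
def HasA1Const (C : ℝ) : Prop :=
  ∀ (a : EuclideanSpace ℝ (Fin n)) (r : ℝ), 0 < r →
    wSet w (ball a r) * essSupInv w (ball a r) ≤ ENNReal.ofReal C * volume (ball a r)

lemma MuckA1.exists_hasA1Const {w : EuclideanSpace ℝ (Fin n) → ℝ} (h : MuckA1 w) :
    ∃ C, 0 < C ∧ HasA1Const w C := by
  obtain ⟨C, hC0, hC⟩ := h
  refine ⟨C, hC0, fun a r hr => ?_⟩
  have hvol0 := (measure_ball_pos volume a hr).ne'
  rw [← ENNReal.div_le_iff hvol0 measure_ball_lt_top.ne, ENNReal.div_eq_inv_mul, ← mul_assoc]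
  exact hC a r hr

lemma essSupInv_mono {E F : Set (EuclideanSpace ℝ (Fin n))} (h : E ⊆ F) :
    essSupInv w E ≤ essSupInv w F :=
  essSup_mono_measure (Measure.absolutelyContinuous_of_le (Measure.restrict_mono h le_rfl))

variable {w}

lemma lintegral_le_essSupInv_mul (hwm : Measurable w) (hpos : ∀ᵐ x ∂volume, 0 < w x)
    {g : EuclideanSpace ℝ (Fin n) → ℝ≥0∞} (hg : Measurable g)
    (E : Set (EuclideanSpace ℝ (Fin n))) :
    ∫⁻ x in E, g x ≤ essSupInv w E * ∫⁻ x in E, g x * ENNReal.ofReal (w x) := by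
  rw [← lintegral_const_mul _ (f := fun x => g x * ENNReal.ofReal (w x))
    (hg.mul hwm.ennreal_ofReal)]
  have hle : ∀ᵐ x ∂volume.restrict E, ENNReal.ofReal (w x)⁻¹ ≤ essSupInv w E :=
    ae_le_essSup
  refine lintegral_mono_ae ((hle.and (ae_restrict_of_ae hpos)).mono fun x ⟨hle, hwx⟩ => ?_)
  have hone : 1 ≤ ENNReal.ofReal (w x) * essSupInv w E := by
    calc (1 : ℝ≥0∞) = ENNReal.ofReal (w x) * ENNReal.ofReal (w x)⁻¹ := by
          rw [← ENNReal.ofReal_mul hwx.le, mul_inv_cancel₀ hwx.ne', ENNReal.ofReal_one]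
      _ ≤ ENNReal.ofReal (w x) * essSupInv w E := mul_le_mul_right hle _
  calc g x = g x * 1 := (mul_one _).symm
    _ ≤ g x * (ENNReal.ofReal (w x) * essSupInv w E) := mul_le_mul_right hone _
    _ = essSupInv w E * (g x * ENNReal.ofReal (w x)) := by ring

lemma volume_le_essSupInv_mul_wSet (hwm : Measurable w) (hpos : ∀ᵐ x ∂volume, 0 < w x)
    (E : Set (EuclideanSpace ℝ (Fin n))) : volume E ≤ essSupInv w E * wSet w E := by
  simpa [wSet] using lintegral_le_essSupInv_mul hwm hpos measurable_const (g := 1) E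

variable {C : ℝ}

lemma HasA1Const.essSupInv_ball_ne_top (hC : HasA1Const w C) (hwm : Measurable w)
    (hpos : ∀ᵐ x ∂volume, 0 < w x) (a : EuclideanSpace ℝ (Fin n)) {r : ℝ} (hr : 0 < r) :
    essSupInv w (ball a r) ≠ ⊤ := by
  intro htop
  have := hC a r hr
  rw [htop, ENNReal.mul_top (wSet_ball_pos w hwm hpos a hr).ne'] at this
  exact (ENNReal.mul_lt_top ENNReal.ofReal_lt_top measure_ball_lt_top).not_ge this

lemma HasA1Const.wSet_ball_mul_le (hC : HasA1Const w C) (hwm : Measurable w)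
    (hpos : ∀ᵐ x ∂volume, 0 < w x) (a : EuclideanSpace ℝ (Fin n)) {r t : ℝ} (hr : 0 < r)
    (ht : 1 ≤ t) :
    wSet w (ball a (t * r)) ≤ ENNReal.ofReal C * ENNReal.ofReal (t ^ n) * wSet w (ball a r) := by
  have htr : 0 < t * r := by positivity
  have hS0 : essSupInv w (ball a r) ≠ 0 := fun h0 => by
    simpa [h0] using (measure_ball_pos volume a hr).trans_le
      (volume_le_essSupInv_mul_wSet hwm hpos (ball a r))
  rw [← ENNReal.mul_le_mul_iff_left hS0 (hC.essSupInv_ball_ne_top hwm hpos a hr)]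
  calc wSet w (ball a (t * r)) * essSupInv w (ball a r)
      ≤ wSet w (ball a (t * r)) * essSupInv w (ball a (t * r)) :=
        mul_le_mul_right (essSupInv_mono w (ball_subset_ball (le_mul_of_one_le_left hr.le ht))) _
    _ ≤ ENNReal.ofReal C * volume (ball a (t * r)) := hC a _ htr
    _ = ENNReal.ofReal C * (ENNReal.ofReal (t ^ n) * volume (ball a r)) := by
        rw [Measure.addHaar_ball_of_pos _ _ htr, Measure.addHaar_ball_of_pos _ _ hr,
          finrank_euclideanSpace_fin, mul_pow, ENNReal.ofReal_mul (by positivity), mul_assoc]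
    _ ≤ ENNReal.ofReal C *
          (ENNReal.ofReal (t ^ n) * (essSupInv w (ball a r) * wSet w (ball a r))) := by
        gcongr
        exact volume_le_essSupInv_mul_wSet hwm hpos _
    _ = ENNReal.ofReal C * ENNReal.ofReal (t ^ n) * wSet w (ball a r) *
          essSupInv w (ball a r) := by
        ring

lemma HasA1Const.lintegral_ball_le (hC : HasA1Const w C) (hwm : Measurable w)
    (hpos : ∀ᵐ x ∂volume, 0 < w x) (hli : LocallyIntegrable w volume)
    {f : EuclideanSpace ℝ (Fin n) → ℝ} (hf : Measurable f) (a : EuclideanSpace ℝ (Fin n))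
    {s : ℝ} (hs : 0 < s) :
    ∫⁻ y in ball a s, ENNReal.ofReal |f y| ≤
      ENNReal.ofReal C * volume (ball a s) / wSet w (ball a s) * wLp 1 w f (ball a s) := by
  have hS : essSupInv w (ball a s) ≤
      ENNReal.ofReal C * volume (ball a s) / wSet w (ball a s) := by
    rw [ENNReal.le_div_iff_mul_le (Or.inl (wSet_ball_pos w hwm hpos a hs).ne')
      (Or.inl (wSet_ball_lt_top w hli a s).ne), mul_comm]
    exact hC a s hs
  rw [wLp_one]
  exact (lintegral_le_essSupInv_mul hwm hpos hf.abs.ennreal_ofReal _).trans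
    (mul_le_mul_left hS _)

end MuckenhouptA1

section FarPart

lemma lintegral_Ioi_rpow_neg_sub_one {p d : ℝ} (hp : 0 < p) (hd : 0 < d) :
    ∫⁻ s in Ioi d, ENNReal.ofReal (s ^ (-p - 1)) = ENNReal.ofReal (d ^ (-p) / p) := by
  have hexp : -p - 1 < -1 := by linarith
  rw [← ofReal_integral_eq_lintegral_ofReal (integrableOn_Ioi_rpow_of_lt hexp hd)
    ((ae_restrict_iff' measurableSet_Ioi).2
      (.of_forall fun s hs => Real.rpow_nonneg (hd.trans hs).le _)),
    integral_Ioi_rpow_of_lt hexp hd, show -p - 1 + 1 = -p by ring, neg_div_neg_eq]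

variable {X : Type*} [PseudoMetricSpace X]

lemma inv_ofReal_dist_pow_le {a x y : X} {r : ℝ} (hx : x ∈ ball a r) (hy : y ∉ ball a (2 * r))
    (n : ℕ) :
    (ENNReal.ofReal (dist x y ^ n))⁻¹ ≤ ENNReal.ofReal (2 ^ n * dist y a ^ (-(n : ℝ))) := by
  rw [mem_ball] at hx
  rw [mem_ball, not_lt] at hy
  have hya : dist y a ≤ 2 * dist x y := by linarith [dist_triangle_left y a x]
  have hya_pos : 0 < dist y a := by linarith [dist_nonneg (x := x) (y := a)]
  have hxy_pos : 0 < dist x y := by linarith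
  rw [← ENNReal.ofReal_inv_of_pos (pow_pos hxy_pos n),
    Real.rpow_neg hya_pos.le, Real.rpow_natCast, ← div_eq_mul_inv]
  refine ENNReal.ofReal_le_ofReal ?_
  calc (dist x y ^ n)⁻¹ = 2 ^ n / (2 * dist x y) ^ n := by
        rw [mul_pow, div_mul_eq_div_div, div_self (by positivity), one_div]
    _ ≤ 2 ^ n / dist y a ^ n := by gcongr

variable [MeasurableSpace X] [OpensMeasurableSpace X]

/-- Write `|y - a|^{-p} = p ∫_{|y-a|}^∞ s^{-p-1} ds` and apply Tonelli. -/
lemma lintegral_compl_ball_mul_rpow_dist_le (μ : Measure X) [SFinite μ] {g : X → ℝ≥0∞}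
    (hg : Measurable g) (a : X) {p R : ℝ} (hp : 0 < p) (hR : 0 < R) :
    ∫⁻ y in (ball a R)ᶜ, g y * ENNReal.ofReal (dist y a ^ (-p)) ∂μ ≤
      ENNReal.ofReal p *
        ∫⁻ s in Ioi R, (∫⁻ y in ball a s, g y ∂μ) * ENNReal.ofReal (s ^ (-p - 1)) := by
  set h : ℝ → ℝ≥0∞ := fun s => ENNReal.ofReal (s ^ (-p - 1))
  set F : X → ℝ → ℝ≥0∞ := fun y s => (ball a s).indicator g y * h s
  have hF : Measurable (Function.uncurry F) :=
    ((hg.comp measurable_fst).indicator (measurableSet_lt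
      ((continuous_id.dist continuous_const).measurable.comp measurable_fst) measurable_snd)).mul
      ((by fun_prop : Measurable h).comp measurable_snd)
  have hlayer : ∀ y ∈ (ball a R)ᶜ,
      g y * ENNReal.ofReal (dist y a ^ (-p)) = ENNReal.ofReal p * ∫⁻ s in Ioi R, F y s := by
    intro y hy
    have hRy : R ≤ dist y a := by simpa [mem_ball] using hy
    have hFy : F y = (Ioi (dist y a)).indicator fun s => g y * h s := by
      ext s
      by_cases hs : dist y a < s <;> simp [F, mem_ball, hs]
    rw [hFy, lintegral_indicator measurableSet_Ioi, Measure.restrict_restrict measurableSet_Ioi,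
      Ioi_inter_Ioi, sup_eq_left.2 hRy, lintegral_const_mul (g y) (by fun_prop : Measurable h),
      lintegral_Ioi_rpow_neg_sub_one hp (hR.trans_le hRy), ← mul_assoc, mul_comm _ (g y),
      mul_assoc, ← ENNReal.ofReal_mul hp.le, mul_div_cancel₀ _ hp.ne']
  calc ∫⁻ y in (ball a R)ᶜ, g y * ENNReal.ofReal (dist y a ^ (-p)) ∂μ
      = ∫⁻ y in (ball a R)ᶜ, ENNReal.ofReal p * (∫⁻ s in Ioi R, F y s) ∂μ :=
        setLIntegral_congr_fun measurableSet_ball.compl hlayer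
    _ = ENNReal.ofReal p * ∫⁻ s in Ioi R, (∫⁻ y in (ball a R)ᶜ, F y s ∂μ) := by
        rw [lintegral_const_mul' _ _ ENNReal.ofReal_ne_top,
          lintegral_lintegral_swap hF.aemeasurable]
    _ ≤ ENNReal.ofReal p * ∫⁻ s in Ioi R, (∫⁻ y, F y s ∂μ) := by
        gcongr
        exact Measure.restrict_le_self
    _ = ENNReal.ofReal p * ∫⁻ s in Ioi R, (∫⁻ y in ball a s, g y ∂μ) * h s := by
        refine congrArg _ (lintegral_congr fun s => ?_)
        rw [lintegral_mul_const' _ _ ENNReal.ofReal_ne_top, lintegral_indicator measurableSet_ball]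

end FarPart

section TailIntegral

variable {n : ℕ}

noncomputable def wTail (w f : EuclideanSpace ℝ (Fin n) → ℝ) (a : EuclideanSpace ℝ (Fin n))
    (r : ℝ) : ℝ≥0∞ :=
  ∫⁻ s in Ioi r, (wSet w (ball a s))⁻¹ * wLp 1 w f (ball a s) * ENNReal.ofReal s⁻¹

variable {w : EuclideanSpace ℝ (Fin n) → ℝ}

/-- Only the range `s ∈ (R, 2R]` of the tail integral is needed. -/
lemma wLp_one_ball_le_mul_wTail (f : EuclideanSpace ℝ (Fin n) → ℝ)
    (a : EuclideanSpace ℝ (Fin n)) {R : ℝ} (hR : 0 < R) (h0 : wSet w (ball a (2 * R)) ≠ 0)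
    (htop : wSet w (ball a (2 * R)) ≠ ⊤) :
    wLp 1 w f (ball a R) ≤ 2 * wSet w (ball a (2 * R)) * wTail w f a R := by
  set W := wSet w (ball a (2 * R))
  set L := wLp 1 w f (ball a R)
  have hlength : ENNReal.ofReal (2 * R)⁻¹ * volume (Ioc R (2 * R)) = 2⁻¹ := by
    rw [Real.volume_Ioc, ← ENNReal.ofReal_mul (by positivity),
      show (2 * R)⁻¹ * (2 * R - R) = 2⁻¹ by field_simp; ring,
      ENNReal.ofReal_inv_of_pos two_pos, ENNReal.ofReal_ofNat]
  have hlower : W⁻¹ * L * 2⁻¹ ≤ wTail w f a R :=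
    calc W⁻¹ * L * 2⁻¹
        = ∫⁻ _ in Ioc R (2 * R), W⁻¹ * L * ENNReal.ofReal (2 * R)⁻¹ := by
          rw [setLIntegral_const, mul_assoc (W⁻¹ * L), hlength]
      _ ≤ ∫⁻ s in Ioc R (2 * R),
            (wSet w (ball a s))⁻¹ * wLp 1 w f (ball a s) * ENNReal.ofReal s⁻¹ := by
          refine setLIntegral_mono' measurableSet_Ioc fun s ⟨hRs, hs2R⟩ => ?_
          gcongr
          · exact wSet_mono w (ball_subset_ball hs2R)
          · exact wLp_one_mono_set w f (ball_subset_ball hRs.le)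
          · exact hR.trans hRs
      _ ≤ wTail w f a R := lintegral_mono_set Ioc_subset_Ioi_self
  calc L = (W * W⁻¹) * (2 * 2⁻¹) * L := by
        rw [ENNReal.mul_inv_cancel h0 htop, ENNReal.mul_inv_cancel two_ne_zero ENNReal.ofNat_ne_top,
          one_mul, one_mul]
    _ = 2 * W * (W⁻¹ * L * 2⁻¹) := by ring
    _ ≤ 2 * W * wTail w f a R := by gcongr

variable {C : ℝ}

lemma HasA1Const.lintegral_indicator_compl_ball_div_dist_pow_le (hC : HasA1Const w C)
    (hwm : Measurable w) (hpos : ∀ᵐ x ∂volume, 0 < w x) (hli : LocallyIntegrable w volume)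
    {f : EuclideanSpace ℝ (Fin n) → ℝ} (hf : Measurable f) {a x : EuclideanSpace ℝ (Fin n)}
    {r : ℝ} (hx : x ∈ ball a r) :
    ∫⁻ y, ENNReal.ofReal |(ball a (2 * r))ᶜ.indicator f y| / ENNReal.ofReal (dist x y ^ n) ≤
      ENNReal.ofReal (2 ^ n) * ENNReal.ofReal n * ENNReal.ofReal C *
        volume (ball (0 : EuclideanSpace ℝ (Fin n)) 1) * wTail w f a r := by
  have hr : 0 < r := pos_of_mem_ball hx
  have hcompl : (fun y => ENNReal.ofReal |(ball a (2 * r))ᶜ.indicator f y| /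
      ENNReal.ofReal (dist x y ^ n)) =
      (ball a (2 * r))ᶜ.indicator
        fun y => ENNReal.ofReal |f y| / ENNReal.ofReal (dist x y ^ n) := by
    ext y
    by_cases hy : y ∈ ball a (2 * r) <;> simp [hy]
  rw [hcompl, lintegral_indicator measurableSet_ball.compl]
  rcases n.eq_zero_or_pos with rfl | hn
  · have : (ball a (2 * r))ᶜ = ∅ := by
      refine compl_empty_iff.2 (eq_univ_of_forall fun y => ?_)
      rw [Subsingleton.elim y a]
      exact mem_ball_self (by positivity)
    simp [this]
  have htail : ∀ s ∈ Ioi (2 * r),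
      (∫⁻ y in ball a s, ENNReal.ofReal |f y|) * ENNReal.ofReal (s ^ (-(n : ℝ) - 1)) ≤
        ENNReal.ofReal C * volume (ball (0 : EuclideanSpace ℝ (Fin n)) 1) *
          ((wSet w (ball a s))⁻¹ * wLp 1 w f (ball a s) * ENNReal.ofReal s⁻¹) := by
    intro s hs
    have hs0 : 0 < s := by linarith [mem_Ioi.1 hs]
    have hpow :
        ENNReal.ofReal (s ^ n) * ENNReal.ofReal (s ^ (-(n : ℝ) - 1)) = ENNReal.ofReal s⁻¹ := by
      rw [← ENNReal.ofReal_mul (by positivity), ← Real.rpow_natCast, ← Real.rpow_add hs0,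
        show (n : ℝ) + (-(n : ℝ) - 1) = -1 by ring, Real.rpow_neg_one]
    calc (∫⁻ y in ball a s, ENNReal.ofReal |f y|) * ENNReal.ofReal (s ^ (-(n : ℝ) - 1))
        ≤ ENNReal.ofReal C * volume (ball a s) / wSet w (ball a s) * wLp 1 w f (ball a s) *
            ENNReal.ofReal (s ^ (-(n : ℝ) - 1)) :=
          mul_le_mul_left (hC.lintegral_ball_le hwm hpos hli hf a hs0) _
      _ = _ := by
          rw [Measure.addHaar_ball_of_pos _ _ hs0, finrank_euclideanSpace_fin, div_eq_mul_inv,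
            ← hpow]
          ring
  calc ∫⁻ y in (ball a (2 * r))ᶜ, ENNReal.ofReal |f y| / ENNReal.ofReal (dist x y ^ n)
      ≤ ∫⁻ y in (ball a (2 * r))ᶜ, ENNReal.ofReal (2 ^ n) *
          (ENNReal.ofReal |f y| * ENNReal.ofReal (dist y a ^ (-(n : ℝ)))) := by
        refine setLIntegral_mono' measurableSet_ball.compl fun y hy => ?_
        rw [div_eq_mul_inv, mul_left_comm, ← ENNReal.ofReal_mul (by positivity)]
        exact mul_le_mul_right (inv_ofReal_dist_pow_le hx hy n) _
    _ = ENNReal.ofReal (2 ^ n) * ∫⁻ y in (ball a (2 * r))ᶜ,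
          ENNReal.ofReal |f y| * ENNReal.ofReal (dist y a ^ (-(n : ℝ))) :=
        lintegral_const_mul' _ _ ENNReal.ofReal_ne_top
    _ ≤ ENNReal.ofReal (2 ^ n) * (ENNReal.ofReal n * ∫⁻ s in Ioi (2 * r),
          (∫⁻ y in ball a s, ENNReal.ofReal |f y|) *
            ENNReal.ofReal (s ^ (-(n : ℝ) - 1))) := by
        gcongr
        exact lintegral_compl_ball_mul_rpow_dist_le volume hf.abs.ennreal_ofReal a
          (Nat.cast_pos.2 hn) (by positivity)
    _ ≤ ENNReal.ofReal (2 ^ n) * (ENNReal.ofReal n * ∫⁻ s in Ioi r,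
          ENNReal.ofReal C * volume (ball (0 : EuclideanSpace ℝ (Fin n)) 1) *
            ((wSet w (ball a s))⁻¹ * wLp 1 w f (ball a s) * ENNReal.ofReal s⁻¹)) := by
        gcongr _ * (_ * ?_)
        exact (setLIntegral_mono' measurableSet_Ioi htail).trans
          (lintegral_mono_set (Ioi_subset_Ioi (by linarith)))
    _ = _ := by
        rw [lintegral_const_mul' _ _ (ENNReal.mul_ne_top ENNReal.ofReal_ne_top
          measure_ball_lt_top.ne), wTail]
        ring

end TailIntegral

section SingularOperator

variable {n : ℕ} {w : EuclideanSpace ℝ (Fin n) → ℝ} {C : ℝ}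
  (T : (EuclideanSpace ℝ (Fin n) → ℝ) → (EuclideanSpace ℝ (Fin n) → ℝ))

lemma HasA1Const.wWeakLp_one_indicator_ball_le (hC : HasA1Const w C) (hwm : Measurable w)
    (hpos : ∀ᵐ x ∂volume, 0 < w x) (hli : LocallyIntegrable w volume) {C₀ : ℝ}
    (hbdd : ∀ f : EuclideanSpace ℝ (Fin n) → ℝ, Measurable f →
      wLp 1 w f Set.univ < ⊤ →
      wWeakLp 1 w (T f) Set.univ ≤ ENNReal.ofReal C₀ * wLp 1 w f Set.univ)
    {f : EuclideanSpace ℝ (Fin n) → ℝ} (hf : Measurable f) (a : EuclideanSpace ℝ (Fin n))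
    {r : ℝ} (hr : 0 < r) (hfin : wLp 1 w f (ball a (2 * r)) < ⊤) :
    wWeakLp 1 w (T ((ball a (2 * r)).indicator f)) (ball a r) ≤
      ENNReal.ofReal C₀ * (2 * (ENNReal.ofReal C * ENNReal.ofReal (4 ^ n))) *
        wSet w (ball a r) * wTail w f a r := by
  have h4r : ball a (2 * (2 * r)) = ball a (4 * r) := by ring_nf
  calc wWeakLp 1 w (T ((ball a (2 * r)).indicator f)) (ball a r)
      ≤ wWeakLp 1 w (T ((ball a (2 * r)).indicator f)) univ :=
        wWeakLp_one_mono_set w _ (subset_univ _)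
    _ ≤ ENNReal.ofReal C₀ * wLp 1 w f (ball a (2 * r)) := by
        rw [← wLp_one_indicator w f measurableSet_ball]
        exact hbdd _ (hf.indicator measurableSet_ball)
          (by rwa [wLp_one_indicator w f measurableSet_ball])
    _ ≤ ENNReal.ofReal C₀ * (2 * wSet w (ball a (4 * r)) * wTail w f a (2 * r)) := by
        rw [← h4r]
        gcongr
        exact wLp_one_ball_le_mul_wTail f a (by positivity)
          (wSet_ball_pos w hwm hpos a (by positivity)).ne' (wSet_ball_lt_top w hli a _).ne
    _ ≤ ENNReal.ofReal C₀ * (2 * (ENNReal.ofReal C * ENNReal.ofReal (4 ^ n) *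
          wSet w (ball a r)) * wTail w f a r) := by
        gcongr
        · exact hC.wSet_ball_mul_le hwm hpos a hr (by norm_num)
        · exact lintegral_mono_set (Ioi_subset_Ioi (by linarith))
    _ = _ := by ring

lemma HasA1Const.wWeakLp_one_indicator_compl_ball_le (hC : HasA1Const w C) (hwm : Measurable w)
    (hpos : ∀ᵐ x ∂volume, 0 < w x) (hli : LocallyIntegrable w volume) {A : ℝ}
    (hker : ∀ (f : EuclideanSpace ℝ (Fin n) → ℝ) (x : EuclideanSpace ℝ (Fin n)),
      x ∉ tsupport f →
      ENNReal.ofReal |T f x| ≤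
        ENNReal.ofReal A * ∫⁻ y, ENNReal.ofReal |f y| / ENNReal.ofReal (dist x y ^ n))
    {f : EuclideanSpace ℝ (Fin n) → ℝ} (hf : Measurable f) (a : EuclideanSpace ℝ (Fin n))
    (r : ℝ) :
    wWeakLp 1 w (T ((ball a (2 * r))ᶜ.indicator f)) (ball a r) ≤
      ENNReal.ofReal A * (ENNReal.ofReal (2 ^ n) * ENNReal.ofReal n * ENNReal.ofReal C *
        volume (ball (0 : EuclideanSpace ℝ (Fin n)) 1)) * wSet w (ball a r) * wTail w f a r := by
  rw [mul_right_comm]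
  refine wWeakLp_one_le_mul_wSet w fun x hx => (hker _ x fun hsupp => ?_).trans ?_
  · have hclosed : tsupport ((ball a (2 * r))ᶜ.indicator f) ⊆ (ball a (2 * r))ᶜ :=
      closure_minimal support_indicator_subset isOpen_ball.isClosed_compl
    exact hclosed hsupp (ball_subset_ball (by linarith [pos_of_mem_ball hx]) hx)
  · rw [mul_assoc]
    exact mul_le_mul_right (hC.lintegral_indicator_compl_ball_div_dist_pow_le hwm hpos hli hf hx) _

end SingularOperator

theorem statement18_general {n : ℕ}
    (w : EuclideanSpace ℝ (Fin n) → ℝ) (hw : IsWeight w) (hA1 : MuckA1 w)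
    (T : (EuclideanSpace ℝ (Fin n) → ℝ) → (EuclideanSpace ℝ (Fin n) → ℝ))
    (hadd : ∀ f g, T (f + g) = T f + T g)
    (C₀ : ℝ) (hC₀ : 0 < C₀)
    (hbdd : ∀ f : EuclideanSpace ℝ (Fin n) → ℝ, Measurable f →
      wLp 1 w f Set.univ < ⊤ →
      wWeakLp 1 w (T f) Set.univ ≤ ENNReal.ofReal C₀ * wLp 1 w f Set.univ)
    (A : ℝ)
    (hker : ∀ (f : EuclideanSpace ℝ (Fin n) → ℝ) (x : EuclideanSpace ℝ (Fin n)),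
      x ∉ tsupport f →
      ENNReal.ofReal |T f x| ≤
        ENNReal.ofReal A * ∫⁻ y, ENNReal.ofReal |f y| / ENNReal.ofReal (dist x y ^ n)) :
    ∃ C : ℝ, 0 < C ∧
      ∀ (a : EuclideanSpace ℝ (Fin n)) (r : ℝ) (f : EuclideanSpace ℝ (Fin n) → ℝ),
        0 < r → MemLocWLp 1 w f →
        wWeakLp 1 w (T f) (ball a r) ≤
          ENNReal.ofReal C * wSet w (ball a r) *
            ∫⁻ s in Set.Ioi r,
              (wSet w (ball a s))⁻¹ * wLp 1 w f (ball a s) * ENNReal.ofReal s⁻¹ := by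
  obtain ⟨hwm, -, hli, hpos⟩ := hw
  obtain ⟨C, hC0, hC⟩ := hA1.exists_hasA1Const
  set κnear : ℝ≥0∞ := ENNReal.ofReal C₀ * (2 * (ENNReal.ofReal C * ENNReal.ofReal (4 ^ n)))
  set κfar : ℝ≥0∞ := ENNReal.ofReal A * (ENNReal.ofReal (2 ^ n) * ENNReal.ofReal n *
    ENNReal.ofReal C * volume (ball (0 : EuclideanSpace ℝ (Fin n)) 1))
  have hKtop : 2 * κnear + 2 * κfar ≠ ⊤ := by
    simp [κnear, κfar, ENNReal.mul_eq_top, measure_ball_lt_top.ne]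
  have hK0 : 2 * κnear + 2 * κfar ≠ 0 := by positivity
  refine ⟨(2 * κnear + 2 * κfar).toReal, ENNReal.toReal_pos hK0 hKtop,
    fun a r f hr ⟨hf, hfin⟩ => ?_⟩
  rw [ENNReal.ofReal_toReal hKtop]
  calc wWeakLp 1 w (T f) (ball a r)
      = wWeakLp 1 w (T ((ball a (2 * r)).indicator f) + T ((ball a (2 * r))ᶜ.indicator f))
          (ball a r) := by rw [← hadd, indicator_self_add_compl]
    _ ≤ 2 * wWeakLp 1 w (T ((ball a (2 * r)).indicator f)) (ball a r) +
          2 * wWeakLp 1 w (T ((ball a (2 * r))ᶜ.indicator f)) (ball a r) :=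
        wWeakLp_one_add_le w _ _ _
    _ ≤ 2 * (κnear * wSet w (ball a r) * wTail w f a r) +
          2 * (κfar * wSet w (ball a r) * wTail w f a r) := by
        gcongr
        · exact hC.wWeakLp_one_indicator_ball_le T hwm hpos hli hbdd hf a hr
            (hfin a _ (by positivity))
        · exact hC.wWeakLp_one_indicator_compl_ball_le T hwm hpos hli hker hf a r
    _ = (2 * κnear + 2 * κfar) * wSet w (ball a r) * wTail w f a r := by ring

/-- Let `w ∈ A_1`, and let `T` be an additive operator that is bounded from
`L^{1,w}` to `WL^{1,w}` and satisfies `|Tf(x)| ≤ A·∫ |f(y)|/|x−y|^n dy` for `x` outside the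
support of `f`. Then there is `C > 0`, independent of `f`, `a`, `r`, with
`‖Tf‖_{WL^{1,w}(B(a,r))} ≤ C·w(B(a,r))·∫_r^∞ w(B(a,s))⁻¹‖f‖_{L^{1,w}(B(a,s))} ds/s`
for every `a ∈ ℝⁿ`, `r > 0` and `f ∈ L^{1,w}_loc`. -/
theorem statement18 {n : ℕ}
    (w : EuclideanSpace ℝ (Fin n) → ℝ) (hw : IsWeight w) (hA1 : MuckA1 w)
    (T : (EuclideanSpace ℝ (Fin n) → ℝ) → (EuclideanSpace ℝ (Fin n) → ℝ))
    (hadd : ∀ f g, T (f + g) = T f + T g)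
    (C₀ : ℝ) (hC₀ : 0 < C₀)
    (hbdd : ∀ f : EuclideanSpace ℝ (Fin n) → ℝ, Measurable f →
      wLp 1 w f Set.univ < ⊤ →
      wWeakLp 1 w (T f) Set.univ ≤ ENNReal.ofReal C₀ * wLp 1 w f Set.univ)
    (A : ℝ) (hA : 0 < A)
    (hker : ∀ (f : EuclideanSpace ℝ (Fin n) → ℝ) (x : EuclideanSpace ℝ (Fin n)),
      x ∉ tsupport f →
      ENNReal.ofReal |T f x| ≤
        ENNReal.ofReal A * ∫⁻ y, ENNReal.ofReal |f y| / ENNReal.ofReal (dist x y ^ n)) :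
    ∃ C : ℝ, 0 < C ∧
      ∀ (a : EuclideanSpace ℝ (Fin n)) (r : ℝ) (f : EuclideanSpace ℝ (Fin n) → ℝ),
        0 < r → MemLocWLp 1 w f →
        wWeakLp 1 w (T f) (ball a r) ≤
          ENNReal.ofReal C * wSet w (ball a r) *
            ∫⁻ s in Set.Ioi r,
              (wSet w (ball a s))⁻¹ * wLp 1 w f (ball a s) * ENNReal.ofReal s⁻¹ :=
  statement18_general w hw hA1 T hadd C₀ hC₀ hbdd A hker
end

section
/- Let 1 < p < ∞ and w ∈ A_p. Let T be an operator mapping measurable functions on ℝⁿ to measurable functions on ℝⁿ such that: (i) T is additive, T(f+g) = Tf + Tg; (ii) there is C₀ > 0 with ‖Tf‖_{L^{p,w}(ℝⁿ)} ≤ C₀‖f‖_{L^{p,w}(ℝⁿ)} for every f ∈ L^{p,w}; and (iii) there is A > 0 such that |Tf(x)| ≤ A·∫_{ℝⁿ} |f(y)|/|x−y|^n dy for every f and every x outside the support of f. Suppose ψ₁ and ψ₂ are positive functions on ℝⁿ × (0,∞) for which there is a constant C > 0, independent of a and r, with ∫_r^∞ ψ₁(a,t) dt/t ≤ C·ψ₂(a,r)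 for every (a,r) ∈ ℝⁿ × (0,∞). Then T is bounded from M^{p,w}_{ψ₁} to M^{p,w}_{ψ₂}: there is C' > 0 such that ‖Tf‖_{M^{p,w}_{ψ₂}} ≤ C'·‖f‖_{M^{p,w}_{ψ₁}} for every f ∈ M^{p,w}_{ψ₁}. -/
open MeasureTheory Metric Set
open scoped ENNReal

/-! Fix a ball `B = B(a, r)` and split `f = f₁ + f₂` with `f₁ = f · 1_{2B}`.

Near part: `T` is bounded on `L^{p,w}`, so it suffices to bound `‖f‖_{L^{p,w}(2B)}`. For every
`t ∈ (2r, 4r)` the Morrey norm gives `‖f‖_{L^{p,w}(2B)} ≤ ψ₁(a,t) w(4B)^{1/p} ‖f‖_{M_{ψ₁}}`;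
averaging over `t` against `dt/t` brings in `∫_r^∞ ψ₁(a,t) dt/t`, and the doubling property of
`A_p` weights replaces `w(4B)` by `w(B)`.

Far part: for `x ∈ B` the size condition gives `|T f₂(x)| ≲ ∫_{(2B)ᶜ} |f(y)| |y - a|^{-n} dy`.
Writing `|y - a|^{-n} ≲ ∫_{|y-a|}^∞ t^{-n} dt/t` and exchanging the integrals turns this into
`∫_{2r}^∞ t^{-n} (∫_{B(a,t)} |f|) dt/t`, and Hölder's inequality with the `A_p` condition gives
`∫_{B(a,t)} |f| ≲ |B(a,t)| ψ₁(a,t) ‖f‖_{M_{ψ₁}}`.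

Hence `‖Tf‖_{L^{p,w}(B)} ≲ w(B)^{1/p} ‖f‖_{M_{ψ₁}} ∫_r^∞ ψ₁(a,t) dt/t`, and the hypothesis on
`ψ₁, ψ₂` bounds the right-hand side by `w(B)^{1/p} ψ₂(a,r) ‖f‖_{M_{ψ₁}}`. -/

theorem ENNReal.rpow_add_le_two_rpow_mul_add_rpow (x y : ℝ≥0∞) {p : ℝ} (hp : 1 ≤ p) :
    (x + y) ^ p ≤ 2 ^ p * (x ^ p + y ^ p) :=
  (ENNReal.rpow_add_le_mul_rpow_add_rpow x y hp).trans
    (by gcongr; exacts [one_le_two, by linarith])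

noncomputable def tailIntegral (φ : ℝ → ℝ) (r : ℝ) : ℝ≥0∞ :=
  ∫⁻ t in Ioi r, ENNReal.ofReal (φ t) * ENNReal.ofReal t⁻¹

theorem tailIntegral_antitone (φ : ℝ → ℝ) : Antitone (tailIntegral φ) :=
  fun _ _ h => lintegral_mono_set (Ioi_subset_Ioi h)

theorem le_two_mul_mul_lintegral_Ioo {X c : ℝ≥0∞} (hc : c ≠ ⊤) {φ : ℝ → ℝ≥0∞} {s : ℝ}
    (hs : 0 < s) (h : ∀ t ∈ Ioo s (2 * s), X ≤ φ t * c) :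
    X ≤ 2 * c * ∫⁻ t in Ioo s (2 * s), φ t * ENNReal.ofReal t⁻¹ := by
  have hinv : Measurable fun t : ℝ => ENNReal.ofReal t⁻¹ :=
    ENNReal.measurable_ofReal.comp measurable_inv
  have hlow : 2⁻¹ ≤ ∫⁻ t in Ioo s (2 * s), ENNReal.ofReal t⁻¹ :=
    calc (2⁻¹ : ℝ≥0∞) = ∫⁻ _ in Ioo s (2 * s), ENNReal.ofReal (2 * s)⁻¹ := by
          rw [setLIntegral_const, Real.volume_Ioo, ← ENNReal.ofReal_mul (by positivity),
            show (2 * s)⁻¹ * (2 * s - s) = 2⁻¹ by field_simp; ring,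
            ENNReal.ofReal_inv_of_pos two_pos, ENNReal.ofReal_ofNat]
      _ ≤ ∫⁻ t in Ioo s (2 * s), ENNReal.ofReal t⁻¹ :=
          setLIntegral_mono' measurableSet_Ioo fun t ht =>
            ENNReal.ofReal_le_ofReal (inv_anti₀ (hs.trans ht.1) ht.2.le)
  calc X = 2 * (2⁻¹ * X) := by
        rw [← mul_assoc, ENNReal.mul_inv_cancel two_ne_zero ENNReal.ofNat_ne_top, one_mul]
    _ ≤ 2 * ∫⁻ t in Ioo s (2 * s), ENNReal.ofReal t⁻¹ * X := by
        rw [lintegral_mul_const _ hinv]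
        gcongr
    _ ≤ 2 * ∫⁻ t in Ioo s (2 * s), c * (φ t * ENNReal.ofReal t⁻¹) := by
        gcongr 2 * ?_
        refine setLIntegral_mono' measurableSet_Ioo fun t ht => ?_
        calc ENNReal.ofReal t⁻¹ * X ≤ ENNReal.ofReal t⁻¹ * (φ t * c) := by gcongr; exact h t ht
          _ = c * (φ t * ENNReal.ofReal t⁻¹) := by ring
    _ = 2 * c * ∫⁻ t in Ioo s (2 * s), φ t * ENNReal.ofReal t⁻¹ := by
        rw [lintegral_const_mul' _ _ hc, mul_assoc]

theorem inv_ofReal_pow_le_lintegral_Ioi {d : ℝ} (hd : 0 < d) (n : ℕ) :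
    (ENNReal.ofReal (d ^ n))⁻¹ ≤
      2 ^ (n + 1) * ∫⁻ t in Ioi d, (ENNReal.ofReal (t ^ n))⁻¹ * ENNReal.ofReal t⁻¹ := by
  have h := le_two_mul_mul_lintegral_Ioo (X := (ENNReal.ofReal (d ^ n))⁻¹)
    (φ := fun t => (ENNReal.ofReal (t ^ n))⁻¹) (ENNReal.pow_ne_top ENNReal.ofNat_ne_top) hd
    fun t ht => by
      have ht0 : 0 < t := hd.trans ht.1
      rw [← ENNReal.ofReal_inv_of_pos (by positivity), ← ENNReal.ofReal_inv_of_pos (by positivity),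
        ← ENNReal.ofReal_ofNat, ← ENNReal.ofReal_pow zero_le_two,
        ← ENNReal.ofReal_mul (by positivity)]
      refine ENNReal.ofReal_le_ofReal ?_
      calc (d ^ n)⁻¹ = (t ^ n)⁻¹ * (t / d) ^ n := by rw [div_pow]; field_simp
        _ ≤ (t ^ n)⁻¹ * 2 ^ n := by
            gcongr
            rw [div_le_iff₀ hd]; linarith [ht.2]
  refine h.trans ?_
  rw [pow_succ']
  gcongr
  exact Ioo_subset_Ioi_self

theorem lintegral_mul_lintegral_Ioi_dist {X : Type*} [PseudoMetricSpace X] [MeasurableSpace X]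
    [OpensMeasurableSpace X] {μ : Measure X} [SFinite μ] (a : X) {F : X → ℝ≥0∞}
    (hF : Measurable F) {g : ℝ → ℝ≥0∞} (hg : Measurable g) :
    ∫⁻ y, F y * (∫⁻ t in Ioi (dist a y), g t) ∂μ = ∫⁻ t, g t * ∫⁻ y in ball a t, F y ∂μ := by
  set D : Set (X × ℝ) := {q | dist a q.1 < q.2}
  have hD : MeasurableSet D :=
    measurableSet_lt (f := fun q : X × ℝ => dist a q.1)
      ((continuous_const.dist continuous_id).measurable.comp measurable_fst) measurable_snd
  have hy : ∀ y, F y * ∫⁻ t in Ioi (dist a y), g t =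
      ∫⁻ t, D.indicator (fun q => F q.1 * g q.2) (y, t) := by
    intro y
    rw [← lintegral_const_mul _ hg, ← lintegral_indicator measurableSet_Ioi]
    rfl
  have ht : ∀ t, g t * ∫⁻ y in ball a t, F y ∂μ =
      ∫⁻ y, D.indicator (fun q => F q.1 * g q.2) (y, t) ∂μ := by
    intro t
    rw [← lintegral_const_mul _ hF, ← lintegral_indicator measurableSet_ball]
    congr with y
    by_cases h : dist a y < t <;> simp [D, h, dist_comm, mul_comm]
  simp_rw [hy, ht]
  exact lintegral_lintegral_swap
    (((hF.comp measurable_fst).mul (hg.comp measurable_snd)).indicator hD).aemeasurable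

theorem lintegral_compl_ball_div_dist_pow_le_lintegral_Ioi {X : Type*} [PseudoMetricSpace X]
    [MeasurableSpace X] [OpensMeasurableSpace X] {μ : Measure X} [SFinite μ]
    {F : X → ℝ≥0∞} (hF : Measurable F) (a : X) {s : ℝ} (hs : 0 < s) (n : ℕ) :
    ∫⁻ y in (ball a s)ᶜ, F y / ENNReal.ofReal (dist a y ^ n) ∂μ ≤
      2 ^ (n + 1) * ∫⁻ t in Ioi s, (ENNReal.ofReal (t ^ n))⁻¹ * ENNReal.ofReal t⁻¹ *
        ∫⁻ y in ball a t, F y ∂μ := by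
  set g : ℝ → ℝ≥0∞ := fun t => (ENNReal.ofReal (t ^ n))⁻¹ * ENNReal.ofReal t⁻¹
  have hkernel : ∀ y ∈ (ball a s)ᶜ, F y / ENNReal.ofReal (dist a y ^ n) ≤
      2 ^ (n + 1) * (F y * ∫⁻ t in Ioi (dist a y), g t) := fun y hy => by
    have hd : s ≤ dist a y := by simpa [dist_comm] using hy
    calc F y / ENNReal.ofReal (dist a y ^ n)
        ≤ F y * (2 ^ (n + 1) * ∫⁻ t in Ioi (dist a y), g t) := by
          rw [div_eq_mul_inv]
          gcongr
          exact inv_ofReal_pow_le_lintegral_Ioi (hs.trans_le hd) n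
      _ = _ := by ring
  have hball : ∀ t, g t * ∫⁻ y in ball a t, F y ∂μ.restrict (ball a s)ᶜ ≤
      (Ioi s).indicator (fun t => g t * ∫⁻ y in ball a t, F y ∂μ) t := fun t => by
    rw [Measure.restrict_restrict measurableSet_ball]
    by_cases ht : s < t
    · rw [indicator_of_mem (mem_Ioi.2 ht)]
      gcongr
      exact inter_subset_left
    · have hempty : ball a t ∩ (ball a s)ᶜ = ∅ :=
        sdiff_eq_empty.2 (ball_subset_ball (not_lt.1 ht))
      simp [hempty, ht]
  calc _ ≤ 2 ^ (n + 1) * ∫⁻ y in (ball a s)ᶜ, F y * (∫⁻ t in Ioi (dist a y), g t) ∂μ := by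
        rw [← lintegral_const_mul' _ _ (by simp)]
        exact setLIntegral_mono' measurableSet_ball.compl hkernel
    _ = 2 ^ (n + 1) * ∫⁻ t, g t * ∫⁻ y in ball a t, F y ∂μ.restrict (ball a s)ᶜ := by
        rw [lintegral_mul_lintegral_Ioi_dist a hF (by fun_prop)]
    _ ≤ 2 ^ (n + 1) * ∫⁻ t in Ioi s, g t * ∫⁻ y in ball a t, F y ∂μ := by
        rw [← lintegral_indicator measurableSet_Ioi]
        gcongr with t
        exact hball t

theorem notMem_tsupport_indicator_compl_ball {X M : Type*} [PseudoMetricSpace X] [Zero M]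
    (f : X → M) {a x : X} {s : ℝ} (hx : x ∈ ball a s) :
    x ∉ tsupport ((ball a s)ᶜ.indicator f) :=
  fun h => closure_minimal support_indicator_subset isOpen_ball.isClosed_compl h hx

section

variable {n : ℕ}

local notation "E" => EuclideanSpace ℝ (Fin n)

theorem volume_ball_eq (a : E) {t : ℝ} (ht : 0 < t) :
    volume (ball a t) = ENNReal.ofReal (t ^ n) * volume (ball (0 : E) 1) := by
  rw [Measure.addHaar_ball_of_pos volume a ht, finrank_euclideanSpace_fin]

theorem IsWeight.wSet_ball_lt_top {w : E → ℝ} (hw : IsWeight w) (a : E) (r : ℝ) :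
    wSet w (ball a r) < ⊤ := by
  obtain ⟨-, hnn, hloc, -⟩ := hw
  calc wSet w (ball a r) ≤ ∫⁻ x in closedBall a r, ‖w x‖ₑ := by
        refine (lintegral_mono_set ball_subset_closedBall).trans (lintegral_mono fun x => ?_)
        rw [Real.enorm_eq_ofReal (hnn x)]
    _ < ⊤ := (hloc.integrableOn_isCompact (isCompact_closedBall a r)).2

theorem IsWeight.wSet_ball_ne_zero {w : E → ℝ} (hw : IsWeight w) (a : E) {r : ℝ} (hr : 0 < r) :
    wSet w (ball a r) ≠ 0 := by
  obtain ⟨hmeas, -, -, hpos⟩ := hw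
  refine (setLIntegral_pos_iff (ENNReal.measurable_ofReal.comp hmeas)).2 ?_ |>.ne'
  have hsupp : Function.support (ENNReal.ofReal ∘ w) =ᵐ[volume] univ :=
    Filter.eventuallyEq_univ.2 (by filter_upwards [hpos] with x hx using by simpa using hx)
  rw [measure_congr (inter_ae_eq_right_of_ae_eq_univ hsupp)]
  exact measure_ball_pos volume a hr

theorem wLp_mono_set {p : ℝ} (hp : 0 < p) (w f : E → ℝ) {s t : Set E} (hst : s ⊆ t) :
    wLp p w f s ≤ wLp p w f t :=
  ENNReal.rpow_le_rpow (lintegral_mono_set hst) (by positivity)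

theorem wLp_indicator_univ {p : ℝ} (hp : 0 < p) (w f : E → ℝ) {s : Set E}
    (hs : MeasurableSet s) : wLp p w (s.indicator f) univ = wLp p w f s := by
  unfold wLp
  rw [Measure.restrict_univ, ← lintegral_indicator hs]
  congr 2 with x
  by_cases hx : x ∈ s <;> simp [hx, ENNReal.zero_rpow_of_pos hp]

theorem wLp_le_two_mul_of_abs_le_add {p : ℝ} (hp : 1 ≤ p) {w : E → ℝ} (hw : Measurable w)
    {u v : E → ℝ} {κ : ℝ≥0∞} {s : Set E} (hs : MeasurableSet s)
    (huv : ∀ x ∈ s, ENNReal.ofReal |u x| ≤ ENNReal.ofReal |v x| + κ) :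
    wLp p w u s ≤ 2 * (wLp p w v s + κ * wSet w s ^ (1 / p)) := by
  have hp0 : 0 < p := zero_lt_one.trans_le hp
  have hint : ∫⁻ x in s, ENNReal.ofReal |u x| ^ p * ENNReal.ofReal (w x) ≤
      2 ^ p * ((∫⁻ x in s, ENNReal.ofReal |v x| ^ p * ENNReal.ofReal (w x)) +
        κ ^ p * wSet w s) := by
    calc _ ≤ ∫⁻ x in s, 2 ^ p * (ENNReal.ofReal |v x| ^ p * ENNReal.ofReal (w x) +
            κ ^ p * ENNReal.ofReal (w x)) := by
          refine setLIntegral_mono' hs fun x hx => ?_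
          calc _ ≤ (ENNReal.ofReal |v x| + κ) ^ p * ENNReal.ofReal (w x) := by
                gcongr; exact huv x hx
            _ ≤ 2 ^ p * (ENNReal.ofReal |v x| ^ p + κ ^ p) * ENNReal.ofReal (w x) := by
                gcongr; exact ENNReal.rpow_add_le_two_rpow_mul_add_rpow _ _ hp
            _ = _ := by ring
      _ = _ := by
        rw [lintegral_const_mul' _ _ (by simp), lintegral_add_right _ (by fun_prop),
          lintegral_const_mul _ (by fun_prop), wSet]
  calc wLp p w u s ≤ (2 ^ p * ((∫⁻ x in s, ENNReal.ofReal |v x| ^ p * ENNReal.ofReal (w x)) +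
        κ ^ p * wSet w s)) ^ (1 / p) := ENNReal.rpow_le_rpow hint (by positivity)
    _ = 2 * ((∫⁻ x in s, ENNReal.ofReal |v x| ^ p * ENNReal.ofReal (w x)) +
        κ ^ p * wSet w s) ^ (1 / p) := by
      rw [ENNReal.mul_rpow_of_nonneg _ _ (by positivity), ← ENNReal.rpow_mul,
        mul_one_div_cancel hp0.ne', ENNReal.rpow_one]
    _ ≤ _ := by
      gcongr
      refine (ENNReal.rpow_add_le_add_rpow _ _ (by positivity)
        ((div_le_one hp0).2 hp)).trans_eq ?_
      rw [ENNReal.mul_rpow_of_nonneg _ _ (by positivity), ← ENNReal.rpow_mul,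
        mul_one_div_cancel hp0.ne', ENNReal.rpow_one, wLp]

theorem IsWeight.wSet_ball_rpow_ne_zero {w : E → ℝ} (hw : IsWeight w) (a : E) {r : ℝ}
    (hr : 0 < r) (q : ℝ) : wSet w (ball a r) ^ q ≠ 0 :=
  (ENNReal.rpow_pos (pos_iff_ne_zero.2 (hw.wSet_ball_ne_zero a hr))
    (hw.wSet_ball_lt_top a r).ne).ne'

theorem IsWeight.wSet_ball_rpow_ne_top {w : E → ℝ} (hw : IsWeight w) (a : E) {r : ℝ}
    (hr : 0 < r) (q : ℝ) : wSet w (ball a r) ^ q ≠ ⊤ :=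
  ENNReal.rpow_ne_top_of_ne_zero (hw.wSet_ball_ne_zero a hr) (hw.wSet_ball_lt_top a r).ne

theorem morreyTerm_le_iff {p : ℝ} {w : E → ℝ} (hw : IsWeight w) {ψ : E → ℝ → ℝ} {a : E}
    {t : ℝ} (ht : 0 < t) (hψ : 0 < ψ a t) {X Y : ℝ≥0∞} :
    (ENNReal.ofReal (ψ a t))⁻¹ * wSet w (ball a t) ^ (-(1 / p)) * X ≤ Y ↔
      X ≤ ENNReal.ofReal (ψ a t) * wSet w (ball a t) ^ (1 / p) * Y := by
  have hψ0 : ENNReal.ofReal (ψ a t) ≠ 0 := by simpa using hψ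
  rw [ENNReal.rpow_neg, ← ENNReal.mul_inv (.inl hψ0) (.inl ENNReal.ofReal_ne_top),
    ENNReal.inv_mul_le_iff (mul_ne_zero hψ0 (hw.wSet_ball_rpow_ne_zero a ht _))
      (ENNReal.mul_ne_top ENNReal.ofReal_ne_top (hw.wSet_ball_rpow_ne_top a ht _))]

theorem wLp_ball_le_morreyNorm {p : ℝ} {w : E → ℝ} (hw : IsWeight w) {ψ : E → ℝ → ℝ}
    (f : E → ℝ) (a : E) {t : ℝ} (ht : 0 < t) (hψ : 0 < ψ a t) :
    wLp p w f (ball a t) ≤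
      ENNReal.ofReal (ψ a t) * wSet w (ball a t) ^ (1 / p) * morreyNorm p w ψ f :=
  (morreyTerm_le_iff hw ht hψ).1 (le_iSup₂_of_le (f := fun a (r : Ioi (0 : ℝ)) =>
    (ENNReal.ofReal (ψ a r))⁻¹ * wSet w (ball a r) ^ (-(1 / p)) * wLp p w f (ball a r))
    a ⟨t, ht⟩ le_rfl)

theorem morreyNorm_le_of_forall_ball {p : ℝ} {w : E → ℝ} (hw : IsWeight w)
    {ψ : E → ℝ → ℝ} (hψ : ∀ a r, 0 < r → 0 < ψ a r) {g : E → ℝ} {c : ℝ≥0∞}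
    (h : ∀ a r, 0 < r →
      wLp p w g (ball a r) ≤ ENNReal.ofReal (ψ a r) * wSet w (ball a r) ^ (1 / p) * c) :
    morreyNorm p w ψ g ≤ c :=
  iSup₂_le fun a r => (morreyTerm_le_iff hw r.2 (hψ a r r.2)).2 (h a r r.2)

theorem lintegral_abs_le_wLp_mul {p : ℝ} (hp : 1 < p) {w : E → ℝ} (hw : IsWeight w)
    {f : E → ℝ} (hf : Measurable f) (s : Set E) :
    ∫⁻ y in s, ENNReal.ofReal |f y| ≤
      wLp p w f s * (∫⁻ x in s, ENNReal.ofReal (w x ^ (-(1 / (p - 1))))) ^ ((p - 1) / p) := by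
  have hp0 : 0 < p := zero_lt_one.trans hp
  have hp1 : p - 1 ≠ 0 := by linarith
  set W : E → ℝ≥0∞ := fun x => ENNReal.ofReal (w x)
  have hW : Measurable W := ENNReal.measurable_ofReal.comp hw.1
  have hpos : ∀ᵐ x ∂volume.restrict s, 0 < w x := ae_restrict_of_ae hw.2.2.2
  have hsplit : ∫⁻ y in s, ENNReal.ofReal |f y| =
      ∫⁻ y in s,
        ((fun y => ENNReal.ofReal |f y| * W y ^ (1 / p)) * fun y => W y ^ (-(1 / p))) y := by
    refine lintegral_congr_ae ?_
    filter_upwards [hpos] with x hx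
    rw [Pi.mul_apply, mul_assoc, ← ENNReal.rpow_add _ _ (by simpa [W] using hx)
      ENNReal.ofReal_ne_top, add_neg_cancel, ENNReal.rpow_zero, mul_one]
  have hfirst : (∫⁻ y in s, (ENNReal.ofReal |f y| * W y ^ (1 / p)) ^ p) ^ (1 / p) =
      wLp p w f s := by
    unfold wLp
    congr 2 with y
    rw [ENNReal.mul_rpow_of_nonneg _ _ hp0.le, ← ENNReal.rpow_mul, one_div_mul_cancel hp0.ne',
      ENNReal.rpow_one]
  have hsecond : ∫⁻ y in s, (W y ^ (-(1 / p))) ^ p.conjExponent =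
      ∫⁻ x in s, ENNReal.ofReal (w x ^ (-(1 / (p - 1)))) := by
    refine lintegral_congr_ae ?_
    filter_upwards [hpos] with x hx
    rw [← ENNReal.rpow_mul, ENNReal.ofReal_rpow_of_pos hx, Real.conjExponent]
    congr 2
    field_simp
  have hexp : 1 / p.conjExponent = (p - 1) / p := by
    rw [Real.conjExponent]
    field_simp
  rw [hsplit, ← hfirst, ← hsecond, ← hexp]
  exact ENNReal.lintegral_mul_le_Lp_mul_Lq _ (.conjExponent hp) (by fun_prop) (by fun_prop)

-- `MuckAp p w` is `∃ K, 0 < K ∧ MuckApWith p w K`.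
def MuckApWith (p : ℝ) (w : E → ℝ) (K : ℝ) : Prop :=
  ∀ (a : E) (r : ℝ), 0 < r →
    ((volume (ball a r))⁻¹ * ∫⁻ x in ball a r, ENNReal.ofReal (w x)) *
      ((volume (ball a r))⁻¹ *
        ∫⁻ x in ball a r, ENNReal.ofReal (w x ^ (-(1 / (p - 1))))) ^ (p - 1) ≤
      ENNReal.ofReal K

theorem MuckApWith.wSet_mul_rpow_le {p : ℝ} (hp : 1 < p) {w : E → ℝ} {K : ℝ}
    (hK : MuckApWith p w K) (a : E) {r : ℝ} (hr : 0 < r) :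
    wSet w (ball a r) * (∫⁻ x in ball a r, ENNReal.ofReal (w x ^ (-(1 / (p - 1))))) ^ (p - 1) ≤
      volume (ball a r) ^ p * ENNReal.ofReal K := by
  set V := volume (ball a r)
  have hV0 : V ≠ 0 := (measure_ball_pos volume a hr).ne'
  have hVt : V ≠ ⊤ := measure_ball_lt_top.ne
  have hVp : V⁻¹ * V⁻¹ ^ (p - 1) = (V ^ p)⁻¹ := by
    rw [← ENNReal.inv_rpow]
    calc V⁻¹ * V⁻¹ ^ (p - 1) = V⁻¹ ^ (1 + (p - 1)) := by
          rw [ENNReal.rpow_add_of_nonneg _ _ zero_le_one (by linarith), ENNReal.rpow_one]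
      _ = V⁻¹ ^ p := by rw [add_sub_cancel]
  have h := hK a r hr
  rw [ENNReal.mul_rpow_of_nonneg _ _ (by linarith),
    show ∀ x y z u : ℝ≥0∞, x * y * (z * u) = (x * z) * (y * u) by intros; ring, hVp,
    ENNReal.inv_mul_le_iff (ENNReal.rpow_pos (pos_iff_ne_zero.2 hV0) hVt).ne'
      (ENNReal.rpow_ne_top_of_nonneg (by linarith) hVt)] at h
  exact h

theorem MuckApWith.lintegral_abs_mul_wSet_rpow_le {p : ℝ} (hp : 1 < p) {w : E → ℝ}
    (hw : IsWeight w) {K : ℝ} (hK : MuckApWith p w K) {f : E → ℝ} (hf : Measurable f) (a : E)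
    {r : ℝ} (hr : 0 < r) :
    (∫⁻ y in ball a r, ENNReal.ofReal |f y|) * wSet w (ball a r) ^ (1 / p) ≤
      ENNReal.ofReal K ^ (1 / p) * volume (ball a r) * wLp p w f (ball a r) := by
  have hp0 : 0 < p := zero_lt_one.trans hp
  set I := ∫⁻ x in ball a r, ENNReal.ofReal (w x ^ (-(1 / (p - 1))))
  calc (∫⁻ y in ball a r, ENNReal.ofReal |f y|) * wSet w (ball a r) ^ (1 / p)
      ≤ wLp p w f (ball a r) * I ^ ((p - 1) / p) * wSet w (ball a r) ^ (1 / p) := by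
        gcongr; exact lintegral_abs_le_wLp_mul hp hw hf _
    _ = wLp p w f (ball a r) * (wSet w (ball a r) * I ^ (p - 1)) ^ (1 / p) := by
        rw [ENNReal.mul_rpow_of_nonneg _ _ (by positivity), ← ENNReal.rpow_mul, mul_one_div]
        ring
    _ ≤ wLp p w f (ball a r) * (volume (ball a r) ^ p * ENNReal.ofReal K) ^ (1 / p) := by
        gcongr _ * ?_ ^ _; exact hK.wSet_mul_rpow_le hp a hr
    _ = ENNReal.ofReal K ^ (1 / p) * volume (ball a r) * wLp p w f (ball a r) := by
        rw [ENNReal.mul_rpow_of_nonneg _ _ (by positivity), ← ENNReal.rpow_mul,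
          mul_one_div_cancel hp0.ne', ENNReal.rpow_one]
        ring

-- `lintegral_abs_mul_wSet_rpow_le` applied to the indicator of `ball a r` on `ball a (2 * r)`.
theorem MuckApWith.wSet_ball_two_mul_rpow_le {p : ℝ} (hp : 1 < p) {w : E → ℝ}
    (hw : IsWeight w) {K : ℝ} (hK : MuckApWith p w K) (a : E) {r : ℝ} (hr : 0 < r) :
    wSet w (ball a (2 * r)) ^ (1 / p) ≤
      ENNReal.ofReal K ^ (1 / p) * 2 ^ n * wSet w (ball a r) ^ (1 / p) := by
  have hp0 : 0 < p := zero_lt_one.trans hp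
  set g : E → ℝ := (ball a r).indicator 1
  have hsub : ball a r ⊆ ball a (2 * r) := ball_subset_ball (by linarith)
  have hL : ∫⁻ y in ball a (2 * r), ENNReal.ofReal |g y| = volume (ball a r) := by
    have : (fun y => ENNReal.ofReal |g y|) = (ball a r).indicator 1 := by
      ext y; by_cases hy : y ∈ ball a r <;> simp [g, hy]
    rw [this, lintegral_indicator_one measurableSet_ball,
      Measure.restrict_apply measurableSet_ball, inter_eq_left.2 hsub]
  have hR : wLp p w g (ball a (2 * r)) ≤ wSet w (ball a r) ^ (1 / p) := by
    refine (wLp_mono_set hp0 w g (subset_univ _)).trans_eq ?_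
    rw [wLp_indicator_univ hp0 _ _ measurableSet_ball]
    simp [wLp, wSet]
  have hV : volume (ball a (2 * r)) = 2 ^ n * volume (ball a r) := by
    rw [volume_ball_eq a hr, volume_ball_eq a (by linarith), mul_pow,
      ENNReal.ofReal_mul (by positivity), ENNReal.ofReal_pow zero_le_two, ENNReal.ofReal_ofNat,
      mul_assoc]
  have h := hK.lintegral_abs_mul_wSet_rpow_le hp hw (f := g)
    (measurable_one.indicator measurableSet_ball) a (by linarith : 0 < 2 * r)
  rw [hL, hV] at h
  refine (ENNReal.mul_le_mul_iff_right (measure_ball_pos volume a hr).ne'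
    measure_ball_lt_top.ne).1 (h.trans ?_)
  calc ENNReal.ofReal K ^ (1 / p) * (2 ^ n * volume (ball a r)) * wLp p w g (ball a (2 * r))
      ≤ ENNReal.ofReal K ^ (1 / p) * (2 ^ n * volume (ball a r)) *
          wSet w (ball a r) ^ (1 / p) := by gcongr
    _ = _ := by ring

theorem MuckApWith.lintegral_abs_ball_le_morreyNorm {p : ℝ} (hp : 1 < p) {w : E → ℝ}
    (hw : IsWeight w) {K : ℝ} (hK : MuckApWith p w K) {f : E → ℝ} (hf : Measurable f)
    {ψ : E → ℝ → ℝ} (a : E) {t : ℝ} (ht : 0 < t) (hψ : 0 < ψ a t) :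
    ∫⁻ y in ball a t, ENNReal.ofReal |f y| ≤
      ENNReal.ofReal K ^ (1 / p) * volume (ball a t) * ENNReal.ofReal (ψ a t) *
        morreyNorm p w ψ f := by
  rw [← ENNReal.mul_le_mul_iff_left (hw.wSet_ball_rpow_ne_zero a ht (1 / p))
    (hw.wSet_ball_rpow_ne_top a ht (1 / p))]
  calc _ ≤ ENNReal.ofReal K ^ (1 / p) * volume (ball a t) * wLp p w f (ball a t) :=
        hK.lintegral_abs_mul_wSet_rpow_le hp hw hf a ht
    _ ≤ ENNReal.ofReal K ^ (1 / p) * volume (ball a t) *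
        (ENNReal.ofReal (ψ a t) * wSet w (ball a t) ^ (1 / p) * morreyNorm p w ψ f) := by
        gcongr; exact wLp_ball_le_morreyNorm hw f a ht hψ
    _ = _ := by ring

-- `ψ a` need not be monotone, so the Morrey bound at a single radius cannot be compared with the
-- tail integral; an average over radii `t ∈ (s, 2s)` against `dt/t` can.
theorem wLp_ball_le_tailIntegral {p : ℝ} (hp : 0 < p) {w : E → ℝ} (hw : IsWeight w)
    {ψ : E → ℝ → ℝ} (hψ : ∀ a r, 0 < r → 0 < ψ a r) {f : E → ℝ}
    (hM : morreyNorm p w ψ f ≠ ⊤) (a : E) {s : ℝ} (hs : 0 < s) :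
    wLp p w f (ball a s) ≤
      2 * wSet w (ball a (2 * s)) ^ (1 / p) * morreyNorm p w ψ f * tailIntegral (ψ a) s := by
  set c := wSet w (ball a (2 * s)) ^ (1 / p) * morreyNorm p w ψ f with hc_def
  have hc : c ≠ ⊤ := ENNReal.mul_ne_top (hw.wSet_ball_rpow_ne_top a (by linarith) _) hM
  have h := le_two_mul_mul_lintegral_Ioo (φ := fun t => ENNReal.ofReal (ψ a t)) hc hs
    fun t ht => by
      have ht0 : 0 < t := hs.trans ht.1
      calc wLp p w f (ball a s) ≤ wLp p w f (ball a t) :=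
            wLp_mono_set hp w f (ball_subset_ball ht.1.le)
        _ ≤ ENNReal.ofReal (ψ a t) * wSet w (ball a t) ^ (1 / p) * morreyNorm p w ψ f :=
            wLp_ball_le_morreyNorm hw f a ht0 (hψ a t ht0)
        _ ≤ ENNReal.ofReal (ψ a t) * c := by
            rw [mul_assoc, hc_def]
            gcongr
            exact lintegral_mono_set (ball_subset_ball ht.2.le)
  calc wLp p w f (ball a s) ≤ 2 * c * tailIntegral (ψ a) s :=
        h.trans (by gcongr; exact lintegral_mono_set Ioo_subset_Ioi_self)
    _ = _ := by ring

theorem MuckApWith.lintegral_compl_ball_div_dist_pow_le_tailIntegral {p : ℝ} (hp : 1 < p)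
    {w : E → ℝ} (hw : IsWeight w) {K : ℝ} (hK : MuckApWith p w K) {f : E → ℝ}
    (hf : Measurable f) {ψ : E → ℝ → ℝ} (hψ : ∀ a r, 0 < r → 0 < ψ a r)
    (hM : morreyNorm p w ψ f ≠ ⊤) (a : E) {s : ℝ} (hs : 0 < s) :
    ∫⁻ y in (ball a s)ᶜ, ENNReal.ofReal |f y| / ENNReal.ofReal (dist a y ^ n) ≤
      2 ^ (n + 1) * (ENNReal.ofReal K ^ (1 / p) * volume (ball (0 : E) 1) *
        morreyNorm p w ψ f) * tailIntegral (ψ a) s := by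
  set c := ENNReal.ofReal K ^ (1 / p) * volume (ball (0 : E) 1) * morreyNorm p w ψ f
  have hc : c ≠ ⊤ := by
    have : volume (ball (0 : E) 1) ≠ ⊤ := measure_ball_lt_top.ne
    finiteness
  have hball : ∀ t ∈ Ioi s, (ENNReal.ofReal (t ^ n))⁻¹ * ENNReal.ofReal t⁻¹ *
      ∫⁻ y in ball a t, ENNReal.ofReal |f y| ≤
        c * (ENNReal.ofReal (ψ a t) * ENNReal.ofReal t⁻¹) := fun t ht => by
    have ht0 : 0 < t := hs.trans ht
    calc _ ≤ (ENNReal.ofReal (t ^ n))⁻¹ * ENNReal.ofReal t⁻¹ * (ENNReal.ofReal K ^ (1 / p) *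
            volume (ball a t) * ENNReal.ofReal (ψ a t) * morreyNorm p w ψ f) := by
          gcongr; exact hK.lintegral_abs_ball_le_morreyNorm hp hw hf a ht0 (hψ a t ht0)
      _ = ((ENNReal.ofReal (t ^ n))⁻¹ * ENNReal.ofReal (t ^ n)) *
            (c * (ENNReal.ofReal (ψ a t) * ENNReal.ofReal t⁻¹)) := by
          rw [volume_ball_eq a ht0]; ring
      _ = _ := by
          rw [ENNReal.inv_mul_cancel (by simpa using pow_pos ht0 n) ENNReal.ofReal_ne_top,
            one_mul]
  calc _ ≤ 2 ^ (n + 1) * ∫⁻ t in Ioi s, (ENNReal.ofReal (t ^ n))⁻¹ * ENNReal.ofReal t⁻¹ *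
          ∫⁻ y in ball a t, ENNReal.ofReal |f y| :=
        lintegral_compl_ball_div_dist_pow_le_lintegral_Ioi (by fun_prop) a hs n
    _ ≤ 2 ^ (n + 1) * ∫⁻ t in Ioi s, c * (ENNReal.ofReal (ψ a t) * ENNReal.ofReal t⁻¹) := by
        gcongr 2 ^ (n + 1) * ?_
        exact setLIntegral_mono' measurableSet_Ioi hball
    _ = 2 ^ (n + 1) * c * tailIntegral (ψ a) s := by
        rw [lintegral_const_mul' _ _ hc, tailIntegral]
        ring

theorem lintegral_indicator_div_dist_pow_le (f : E → ℝ) {a x : E} {r : ℝ} (hx : x ∈ ball a r) :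
    ∫⁻ y, ENNReal.ofReal |(ball a (2 * r))ᶜ.indicator f y| / ENNReal.ofReal (dist x y ^ n) ≤
      2 ^ n * ∫⁻ y in (ball a (2 * r))ᶜ, ENNReal.ofReal |f y| / ENNReal.ofReal (dist a y ^ n) := by
  rw [← lintegral_const_mul' _ _ (by simp), ← lintegral_indicator measurableSet_ball.compl]
  refine lintegral_mono fun y => ?_
  by_cases hy : y ∈ (ball a (2 * r))ᶜ
  · rw [indicator_of_mem hy, indicator_of_mem hy]
    have hdist : dist a y ≤ 2 * dist x y := by
      have hxa : dist x a < r := hx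
      have hya : 2 * r ≤ dist y a := by simpa using hy
      linarith [dist_triangle y x a, dist_comm a y, dist_comm x y]
    have hpow : ENNReal.ofReal (dist a y ^ n) ≤ 2 ^ n * ENNReal.ofReal (dist x y ^ n) :=
      calc ENNReal.ofReal (dist a y ^ n) ≤ ENNReal.ofReal ((2 * dist x y) ^ n) :=
            ENNReal.ofReal_le_ofReal (pow_le_pow_left₀ dist_nonneg hdist n)
        _ = 2 ^ n * ENNReal.ofReal (dist x y ^ n) := by
            rw [mul_pow, ENNReal.ofReal_mul (by positivity), ENNReal.ofReal_pow zero_le_two,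
              ENNReal.ofReal_ofNat]
    calc ENNReal.ofReal |f y| / ENNReal.ofReal (dist x y ^ n)
        = 2 ^ n * (ENNReal.ofReal |f y| / (2 ^ n * ENNReal.ofReal (dist x y ^ n))) := by
          rw [← mul_div_assoc, ENNReal.mul_div_mul_left _ _ (by simp) (by simp)]
      _ ≤ 2 ^ n * (ENNReal.ofReal |f y| / ENNReal.ofReal (dist a y ^ n)) := by gcongr
  · simp [hy]

theorem MuckApWith.wLp_ball_two_mul_le {p : ℝ} (hp : 1 < p) {w : E → ℝ} (hw : IsWeight w)
    {K : ℝ} (hK : MuckApWith p w K) {ψ : E → ℝ → ℝ} (hψ : ∀ a r, 0 < r → 0 < ψ a r)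
    {f : E → ℝ} (hM : morreyNorm p w ψ f ≠ ⊤) (a : E) {r : ℝ} (hr : 0 < r) :
    wLp p w f (ball a (2 * r)) ≤ 2 * (ENNReal.ofReal K ^ (1 / p) * 2 ^ n) ^ 2 *
      morreyNorm p w ψ f * tailIntegral (ψ a) r * wSet w (ball a r) ^ (1 / p) := by
  have hr2 : 0 < 2 * r := by linarith
  calc wLp p w f (ball a (2 * r))
      ≤ 2 * wSet w (ball a (2 * (2 * r))) ^ (1 / p) * morreyNorm p w ψ f *
          tailIntegral (ψ a) (2 * r) := wLp_ball_le_tailIntegral (by linarith) hw hψ hM a hr2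
    _ ≤ 2 * ((ENNReal.ofReal K ^ (1 / p) * 2 ^ n) *
          ((ENNReal.ofReal K ^ (1 / p) * 2 ^ n) * wSet w (ball a r) ^ (1 / p))) *
          morreyNorm p w ψ f * tailIntegral (ψ a) r := by
        gcongr
        · exact (hK.wSet_ball_two_mul_rpow_le hp hw a hr2).trans
            (by gcongr; exact hK.wSet_ball_two_mul_rpow_le hp hw a hr)
        · exact tailIntegral_antitone _ (by linarith)
    _ = _ := by ring

theorem MuckApWith.lintegral_indicator_compl_ball_div_dist_pow_le {p : ℝ} (hp : 1 < p)
    {w : E → ℝ} (hw : IsWeight w) {K : ℝ} (hK : MuckApWith p w K) {f : E → ℝ}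
    (hf : Measurable f) {ψ : E → ℝ → ℝ} (hψ : ∀ a r, 0 < r → 0 < ψ a r)
    (hM : morreyNorm p w ψ f ≠ ⊤) {a x : E} {r : ℝ} (hr : 0 < r) (hx : x ∈ ball a r) :
    ∫⁻ y, ENNReal.ofReal |(ball a (2 * r))ᶜ.indicator f y| / ENNReal.ofReal (dist x y ^ n) ≤
      2 ^ n * (2 ^ (n + 1) * (ENNReal.ofReal K ^ (1 / p) * volume (ball (0 : E) 1))) *
        morreyNorm p w ψ f * tailIntegral (ψ a) r := by
  calc _ ≤ 2 ^ n * (2 ^ (n + 1) * (ENNReal.ofReal K ^ (1 / p) * volume (ball (0 : E) 1) *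
          morreyNorm p w ψ f) * tailIntegral (ψ a) (2 * r)) :=
        (lintegral_indicator_div_dist_pow_le f hx).trans (by
          gcongr
          exact hK.lintegral_compl_ball_div_dist_pow_le_tailIntegral hp hw hf hψ hM a
            (by linarith))
    _ ≤ 2 ^ n * (2 ^ (n + 1) * (ENNReal.ofReal K ^ (1 / p) * volume (ball (0 : E) 1) *
          morreyNorm p w ψ f) * tailIntegral (ψ a) r) := by
        gcongr; exact tailIntegral_antitone _ (by linarith)
    _ = _ := by ring

theorem exists_wLp_ball_le_tailIntegral {p : ℝ} (hp : 1 < p) {w : E → ℝ} (hw : IsWeight w)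
    {K : ℝ} (hK : MuckApWith p w K) {T : (E → ℝ) → (E → ℝ)}
    (hadd : ∀ f g, T (f + g) = T f + T g) {C₀ : ℝ}
    (hbdd : ∀ f : E → ℝ, Measurable f →
      wLp p w f univ < ⊤ → wLp p w (T f) univ ≤ ENNReal.ofReal C₀ * wLp p w f univ)
    {A : ℝ} (hker : ∀ (f : E → ℝ) (x : E), x ∉ tsupport f →
      ENNReal.ofReal |T f x| ≤
        ENNReal.ofReal A * ∫⁻ y, ENNReal.ofReal |f y| / ENNReal.ofReal (dist x y ^ n))
    {ψ : E → ℝ → ℝ} (hψ : ∀ a r, 0 < r → 0 < ψ a r) :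
    ∃ c : ℝ≥0∞, c ≠ ⊤ ∧ ∀ f, MemLocWLp p w f → morreyNorm p w ψ f ≠ ⊤ → ∀ a r, 0 < r →
      wLp p w (T f) (ball a r) ≤
        c * morreyNorm p w ψ f * tailIntegral (ψ a) r * wSet w (ball a r) ^ (1 / p) := by
  have hp0 : 0 < p := zero_lt_one.trans hp
  set cNear := ENNReal.ofReal C₀ * (2 * (ENNReal.ofReal K ^ (1 / p) * 2 ^ n) ^ 2)
  set cFar := ENNReal.ofReal A *
    (2 ^ n * (2 ^ (n + 1) * (ENNReal.ofReal K ^ (1 / p) * volume (ball (0 : E) 1))))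
  have hv : volume (ball (0 : E) 1) ≠ ⊤ := measure_ball_lt_top.ne
  refine ⟨2 * (cNear + cFar), by finiteness, ?_⟩
  rintro f ⟨hf, hfloc⟩ hM a r hr
  set M := morreyNorm p w ψ f
  set I := tailIntegral (ψ a) r
  set ν := wSet w (ball a r)
  set f₁ := (ball a (2 * r)).indicator f
  set f₂ := (ball a (2 * r))ᶜ.indicator f
  have hf₁ : wLp p w f₁ univ = wLp p w f (ball a (2 * r)) :=
    wLp_indicator_univ hp0 w f measurableSet_ball
  have hnear : wLp p w (T f₁) (ball a r) ≤ cNear * M * I * ν ^ (1 / p) :=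
    calc wLp p w (T f₁) (ball a r) ≤ wLp p w (T f₁) univ := wLp_mono_set hp0 w _ (subset_univ _)
      _ ≤ ENNReal.ofReal C₀ * wLp p w f (ball a (2 * r)) :=
          hf₁ ▸ hbdd f₁ (hf.indicator measurableSet_ball) (hf₁ ▸ hfloc a _ (by linarith))
      _ ≤ cNear * M * I * ν ^ (1 / p) := by
          simp only [cNear, mul_assoc]
          gcongr
          simpa only [mul_assoc] using hK.wLp_ball_two_mul_le hp hw hψ hM a hr
  have hpointwise : ∀ x ∈ ball a r,
      ENNReal.ofReal |T f x| ≤ ENNReal.ofReal |T f₁ x| + cFar * M * I := fun x hx =>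
    calc ENNReal.ofReal |T f x| = ENNReal.ofReal |T f₁ x + T f₂ x| := by
          rw [← Pi.add_apply, ← hadd, indicator_self_add_compl]
      _ ≤ ENNReal.ofReal |T f₁ x| + ENNReal.ofReal |T f₂ x| :=
          (ENNReal.ofReal_le_ofReal (abs_add_le _ _)).trans ENNReal.ofReal_add_le
      _ ≤ ENNReal.ofReal |T f₁ x| + cFar * M * I := by
          gcongr
          refine (hker f₂ x (notMem_tsupport_indicator_compl_ball f
            (ball_subset_ball (by linarith) hx))).trans ?_
          simp only [cFar, mul_assoc]
          gcongr
          simpa only [mul_assoc] using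
            hK.lintegral_indicator_compl_ball_div_dist_pow_le hp hw hf hψ hM hr hx
  calc wLp p w (T f) (ball a r)
      ≤ 2 * (wLp p w (T f₁) (ball a r) + cFar * M * I * ν ^ (1 / p)) :=
        wLp_le_two_mul_of_abs_le_add hp.le hw.1 measurableSet_ball hpointwise
    _ ≤ 2 * (cNear * M * I * ν ^ (1 / p) + cFar * M * I * ν ^ (1 / p)) := by gcongr
    _ = 2 * (cNear + cFar) * M * I * ν ^ (1 / p) := by ring

end

theorem statement19_general {n : ℕ} (p : ℝ) (hp : 1 < p)
    (w : EuclideanSpace ℝ (Fin n) → ℝ) (hw : IsWeight w) (hAp : MuckAp p w)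
    (T : (EuclideanSpace ℝ (Fin n) → ℝ) → (EuclideanSpace ℝ (Fin n) → ℝ))
    (hadd : ∀ f g, T (f + g) = T f + T g)
    (C₀ : ℝ)
    (hbdd : ∀ f : EuclideanSpace ℝ (Fin n) → ℝ, Measurable f →
      wLp p w f Set.univ < ⊤ → wLp p w (T f) Set.univ ≤ ENNReal.ofReal C₀ * wLp p w f Set.univ)
    (A : ℝ)
    (hker : ∀ (f : EuclideanSpace ℝ (Fin n) → ℝ) (x : EuclideanSpace ℝ (Fin n)),
      x ∉ tsupport f →
      ENNReal.ofReal |T f x| ≤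
        ENNReal.ofReal A * ∫⁻ y, ENNReal.ofReal |f y| / ENNReal.ofReal (dist x y ^ n))
    (ψ₁ ψ₂ : EuclideanSpace ℝ (Fin n) → ℝ → ℝ)
    (hψ₁ : ∀ a r, 0 < r → 0 < ψ₁ a r) (hψ₂ : ∀ a r, 0 < r → 0 < ψ₂ a r)
    (C : ℝ)
    (hcond : ∀ (a : EuclideanSpace ℝ (Fin n)) (r : ℝ), 0 < r →
      (∫⁻ t in Set.Ioi r, ENNReal.ofReal (ψ₁ a t) * ENNReal.ofReal t⁻¹) ≤
        ENNReal.ofReal (C * ψ₂ a r)) :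
    ∃ C' : ℝ, 0 < C' ∧ ∀ f : EuclideanSpace ℝ (Fin n) → ℝ,
      MemLocWLp p w f → morreyNorm p w ψ₁ f < ⊤ →
      morreyNorm p w ψ₂ (T f) ≤ ENNReal.ofReal C' * morreyNorm p w ψ₁ f := by
  obtain ⟨K, -, hK⟩ := hAp
  obtain ⟨c, hc, hlocal⟩ := exists_wLp_ball_le_tailIntegral hp hw hK hadd hbdd hker hψ₁
  set c' := c * ENNReal.ofReal C
  have hc' : c' ≤ ENNReal.ofReal (c'.toReal + 1) :=
    (ENNReal.ofReal_toReal (by finiteness)).symm.le.trans (ENNReal.ofReal_le_ofReal (by linarith))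
  refine ⟨c'.toReal + 1, by positivity, fun f hf hM => ?_⟩
  refine morreyNorm_le_of_forall_ball hw hψ₂ fun a r hr => ?_
  calc wLp p w (T f) (ball a r)
      ≤ c * morreyNorm p w ψ₁ f * tailIntegral (ψ₁ a) r * wSet w (ball a r) ^ (1 / p) :=
        hlocal f hf hM.ne a r hr
    _ ≤ c * morreyNorm p w ψ₁ f * ENNReal.ofReal (C * ψ₂ a r) * wSet w (ball a r) ^ (1 / p) := by
        gcongr; exact hcond a r hr
    _ = ENNReal.ofReal (ψ₂ a r) * wSet w (ball a r) ^ (1 / p) * (c' * morreyNorm p w ψ₁ f) := by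
        rw [ENNReal.ofReal_mul' (hψ₂ a r hr).le]; ring
    _ ≤ _ := by gcongr

/-- Let `1 < p < ∞`, `w ∈ A_p`, and let `T` be an additive operator that is
bounded on `L^{p,w}` and satisfies `|Tf(x)| ≤ A·∫ |f(y)|/|x−y|^n dy` for `x` outside the
support of `f`. Suppose `ψ₁, ψ₂` are positive functions on `ℝⁿ × (0,∞)` with
`∫_r^∞ ψ₁(a,t) dt/t ≤ C·ψ₂(a,r)` for all `(a,r)`. Then `T` is bounded from `M^{p,w}_{ψ₁}`
to `M^{p,w}_{ψ₂}`. -/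
theorem statement19 {n : ℕ} (p : ℝ) (hp : 1 < p)
    (w : EuclideanSpace ℝ (Fin n) → ℝ) (hw : IsWeight w) (hAp : MuckAp p w)
    (T : (EuclideanSpace ℝ (Fin n) → ℝ) → (EuclideanSpace ℝ (Fin n) → ℝ))
    (hadd : ∀ f g, T (f + g) = T f + T g)
    (C₀ : ℝ) (hC₀ : 0 < C₀)
    (hbdd : ∀ f : EuclideanSpace ℝ (Fin n) → ℝ, Measurable f →
      wLp p w f Set.univ < ⊤ → wLp p w (T f) Set.univ ≤ ENNReal.ofReal C₀ * wLp p w f Set.univ)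
    (A : ℝ) (hA : 0 < A)
    (hker : ∀ (f : EuclideanSpace ℝ (Fin n) → ℝ) (x : EuclideanSpace ℝ (Fin n)),
      x ∉ tsupport f →
      ENNReal.ofReal |T f x| ≤
        ENNReal.ofReal A * ∫⁻ y, ENNReal.ofReal |f y| / ENNReal.ofReal (dist x y ^ n))
    (ψ₁ ψ₂ : EuclideanSpace ℝ (Fin n) → ℝ → ℝ)
    (hψ₁ : ∀ a r, 0 < r → 0 < ψ₁ a r) (hψ₂ : ∀ a r, 0 < r → 0 < ψ₂ a r)
    (C : ℝ) (hC : 0 < C)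
    (hcond : ∀ (a : EuclideanSpace ℝ (Fin n)) (r : ℝ), 0 < r →
      (∫⁻ t in Set.Ioi r, ENNReal.ofReal (ψ₁ a t) * ENNReal.ofReal t⁻¹) ≤
        ENNReal.ofReal (C * ψ₂ a r)) :
    ∃ C' : ℝ, 0 < C' ∧ ∀ f : EuclideanSpace ℝ (Fin n) → ℝ,
      MemLocWLp p w f → morreyNorm p w ψ₁ f < ⊤ →
      morreyNorm p w ψ₂ (T f) ≤ ENNReal.ofReal C' * morreyNorm p w ψ₁ f :=
  statement19_general p hp w hw hAp T hadd C₀ hbdd A hker ψ₁ ψ₂ hψ₁ hψ₂ C hcond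
end
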